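/- For every n ≥ 0, the map Δ_𝔑(∂Δⁿ) → Δ_𝔑ⁿ of simplicial categories induced by the boundary inclusion ∂Δⁿ → Δⁿ is a cofibration in sCat. -/

import Mathlib

open CategoryTheory Simplicial Opposite

/-- A (small) simplicially enriched category, presented level-wise. -/
structure SCat : Type 1 where
  Obj : Type
  Hom : Obj → Obj → SSet.{0}
  id : ∀ (x : Obj) (k : SimplexCategoryᵒᵖ), (Hom x x).obj k
  comp : ∀ {x y z : Obj} (k : SimplexCategoryᵒᵖ),
    (Hom x y).obj k → (Hom y z).obj k → (Hom x z).obj k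
  id_comp : ∀ {x y : Obj} (k) (f : (Hom x y).obj k), comp k (id x k) f = f
  comp_id : ∀ {x y : Obj} (k) (f : (Hom x y).obj k), comp k f (id y k) = f
  assoc : ∀ {w x y z : Obj} (k) (f : (Hom w x).obj k) (g : (Hom x y).obj k)
    (h : (Hom y z).obj k), comp k (comp k f g) h = comp k f (comp k g h)
  id_map : ∀ (x : Obj) {k l : SimplexCategoryᵒᵖ} (φ : k ⟶ l),
    (Hom x x).map φ (id x k) = id x l
  comp_map : ∀ {x y z : Obj} {k l : SimplexCategoryᵒᵖ} (φ : k ⟶ l)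
    (f : (Hom x y).obj k) (g : (Hom y z).obj k),
    (Hom x z).map φ (comp k f g) = comp l ((Hom x y).map φ f) ((Hom y z).map φ g)

/-- A simplicial (i.e. simplicially enriched) functor. -/
structure SFunctor (C D : SCat) : Type where
  obj : C.Obj → D.Obj
  map : ∀ {x y : C.Obj} (k : SimplexCategoryᵒᵖ),
    (C.Hom x y).obj k → (D.Hom (obj x) (obj y)).obj k
  map_id : ∀ (x : C.Obj) (k), map k (C.id x k) = D.id (obj x) k
  map_comp : ∀ {x y z : C.Obj} (k) (f : (C.Hom x y).obj k) (g : (C.Hom y z).obj k),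
    map k (C.comp k f g) = D.comp k (map k f) (map k g)
  map_natural : ∀ {x y : C.Obj} {k l : SimplexCategoryᵒᵖ} (φ : k ⟶ l)
    (f : (C.Hom x y).obj k),
    map l ((C.Hom x y).map φ f) = (D.Hom (obj x) (obj y)).map φ (map k f)

namespace SFunctor

theorem ext' {C D : SCat} {F G : SFunctor C D} (h : F.obj = G.obj)
    (h' : ∀ (x y : C.Obj) (k) (f : (C.Hom x y).obj k),
      HEq (F.map (x := x) (y := y) k f) (G.map (x := x) (y := y) k f)) : F = G := by
  cases F with
  | mk Fo Fm _ _ _ =>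
    cases G with
    | mk Go Gm _ _ _ =>
      obtain rfl : Fo = Go := h
      obtain rfl : @Fm = @Gm := by
        funext x y k f
        exact eq_of_heq (h' x y k f)
      rfl

/-- The identity simplicial functor. -/
def id' (C : SCat) : SFunctor C C where
  obj := _root_.id
  map _ f := f
  map_id _ _ := rfl
  map_comp _ _ _ := rfl
  map_natural _ _ := rfl

/-- Composition of simplicial functors. -/
def comp' {C D E : SCat} (F : SFunctor C D) (G : SFunctor D E) : SFunctor C E where
  obj := G.obj ∘ F.obj
  map k f := G.map k (F.map k f)
  map_id x k := by show G.map k (F.map k (C.id x k)) = _; rw [F.map_id, G.map_id]; rfl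
  map_comp k f g := by show G.map k (F.map k (C.comp k f g)) = _; rw [F.map_comp, G.map_comp]
  map_natural φ f := by
    show G.map _ (F.map _ ((C.Hom _ _).map φ f)) = _
    rw [F.map_natural, G.map_natural]; rfl

end SFunctor

instance : Category.{0, 1} SCat where
  Hom := SFunctor
  id := SFunctor.id'
  comp F G := F.comp' G
  id_comp _ := rfl
  comp_id _ := rfl
  assoc _ _ _ := rfl
section Pi0

/-- Two vertices of a simplicial set related by an edge. -/
def edgeRel (X : SSet.{0}) (a b : X.obj (op ⦋0⦌)) : Prop :=
  ∃ e : X.obj (op ⦋1⦌), X.map (SimplexCategory.δ 1).op e = a ∧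
    X.map (SimplexCategory.δ 0).op e = b

/-- The set of connected components of a simplicial set. -/
def pi0 (X : SSet.{0}) : Type := Quot (edgeRel X)

lemma face_degen (X : SSet.{0}) (a : X.obj (op ⦋0⦌)) (i : Fin 2) :
    X.map (SimplexCategory.δ i).op (X.map (SimplexCategory.σ 0).op a) = a := by
  rw [← FunctorToTypes.map_comp_apply, ← op_comp]
  rw [show SimplexCategory.δ i ≫ SimplexCategory.σ 0 = 𝟙 (⦋0⦌ : SimplexCategory) from
    SimplexCategory.Hom.ext _ _ (OrderHom.ext _ _ (funext fun x => by
      have : Subsingleton (Fin (⦋0⦌.len + 1)) := by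
        rw [SimplexCategory.len_mk]; exact Fin.subsingleton_one
      exact Subsingleton.elim _ _))]
  simp

/-- Functoriality of `pi0`. -/
def pi0Map {X Y : SSet.{0}} (f : X ⟶ Y) : pi0 X → pi0 Y :=
  Quot.map (f.app _) (by
    rintro a b ⟨e, h1, h2⟩
    exact ⟨f.app _ e, by rw [← h1, FunctorToTypes.naturality],
      by rw [← h2, FunctorToTypes.naturality]⟩)

/-- The morphism of simplicial hom-sets induced by a simplicial functor. -/
def SFunctor.homNat {C D : SCat} (F : SFunctor C D) (x y : C.Obj) :
    C.Hom x y ⟶ D.Hom (F.obj x) (F.obj y) where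
  app k := ↾(F.map k)
  naturality k l φ := by
    ext a
    show F.map l ((C.Hom x y).map φ a) = (D.Hom (F.obj x) (F.obj y)).map φ (F.map k a)
    exact F.map_natural φ a

/-- The underlying type of the category `π₀ C` of a simplicial category `C`. -/
def SCat.Pi0 (C : SCat) : Type := C.Obj

instance SCat.pi0Category (C : SCat) : Category.{0, 0} (SCat.Pi0 C) where
  Hom x y := pi0 (C.Hom x y)
  id x := Quot.mk _ (C.id x (op ⦋0⦌))
  comp {x y z} f g := Quot.map₂ (C.comp (op ⦋0⦌))
    (by
      rintro a b₁ b₂ ⟨e, h1, h2⟩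
      refine ⟨C.comp (op ⦋1⦌) ((C.Hom x y).map (SimplexCategory.σ 0).op a) e, ?_, ?_⟩
      · erw [C.comp_map, face_degen, h1]
      · erw [C.comp_map, face_degen, h2])
    (by
      rintro a₁ a₂ b ⟨e, h1, h2⟩
      refine ⟨C.comp (op ⦋1⦌) e ((C.Hom y z).map (SimplexCategory.σ 0).op b), ?_, ?_⟩
      · erw [C.comp_map, face_degen, h1]
      · erw [C.comp_map, face_degen, h2]) f g
  id_comp {x y} f := by
    induction f using Quot.ind with
    | _ a => exact congrArg (Quot.mk _) (C.id_comp _ a)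
  comp_id {x y} f := by
    induction f using Quot.ind with
    | _ a => exact congrArg (Quot.mk _) (C.comp_id _ a)
  assoc {w x y z} f g h := by
    induction f using Quot.ind with
    | _ a =>
      induction g using Quot.ind with
      | _ b =>
        induction h using Quot.ind with
        | _ c => exact congrArg (Quot.mk _) (C.assoc _ a b c)

/-- The functor `π₀ C ⥤ π₀ D` induced by a simplicial functor. -/
def SFunctor.pi0Functor {C D : SCat} (F : SFunctor C D) : SCat.Pi0 C ⥤ SCat.Pi0 D where
  obj := F.obj
  map {x y} f := pi0Map (F.homNat x y) f
  map_id x := congrArg (Quot.mk _) (F.map_id x _)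
  map_comp {x y z} f g := by
    induction f using Quot.ind with
    | _ a =>
      induction g using Quot.ind with
      | _ b => exact congrArg (Quot.mk _) (F.map_comp _ a b)

end Pi0
section Homotopy
open CategoryTheory.Limits

/-- The constant map from `X` to `Δ[1]` at vertex `i`. -/
def constTo1 (X : SSet.{0}) (i : Fin 2) : X ⟶ Δ[1] where
  app k := ↾fun _ => SSet.stdSimplex.const 1 i k
  naturality k l φ := by ext a; rfl

lemma constTo1_natural {X Y : SSet.{0}} (f : X ⟶ Y) (i : Fin 2) :
    f ≫ constTo1 Y i = constTo1 X i := by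
  apply NatTrans.ext; funext k; ext a; rfl

/-- The inclusion of `X` into the cylinder `X ⨯ Δ[1]` at vertex `i`. -/
noncomputable def cylIns (X : SSet.{0}) (i : Fin 2) : X ⟶ X ⨯ Δ[1] :=
  prod.lift (𝟙 X) (constTo1 X i)

/-- Elementary simplicial homotopy relation between two maps of simplicial sets. -/
def SHomotopy {X Y : SSet.{0}} (f g : X ⟶ Y) : Prop :=
  ∃ H : X ⨯ Δ[1] ⟶ Y, cylIns X 0 ≫ H = f ∧ cylIns X 1 ≫ H = g

/-- The homotopy relation: equivalence relation generated by elementary homotopies. -/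
def SHomotopic {X Y : SSet.{0}} (f g : X ⟶ Y) : Prop :=
  Relation.EqvGen SHomotopy f g

/-- Simplicial homotopy equivalences of simplicial sets. -/
def IsHomotopyEquiv {X Y : SSet.{0}} (f : X ⟶ Y) : Prop :=
  ∃ g : Y ⟶ X, SHomotopic (f ≫ g) (𝟙 X) ∧ SHomotopic (g ≫ f) (𝟙 Y)

/-- Homotopy classes of maps of simplicial sets. -/
def htpyClasses (X K : SSet.{0}) : Type :=
  Quot (SHomotopy (X := X) (Y := K))

lemma cylIns_naturality {X Y : SSet.{0}} (f : X ⟶ Y) (i : Fin 2) :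
    cylIns X i ≫ prod.map f (𝟙 Δ[1]) = f ≫ cylIns Y i := by
  simp [cylIns, prod.comp_lift, constTo1_natural]

/-- Precomposition on homotopy classes. -/
noncomputable def htpyPrecomp {X Y : SSet.{0}} (f : X ⟶ Y) (K : SSet.{0}) :
    htpyClasses Y K → htpyClasses X K :=
  Quot.map (fun g => f ≫ g) (by
    rintro a b ⟨H, h0, h1⟩
    refine ⟨prod.map f (𝟙 _) ≫ H, ?_, ?_⟩
    · rw [← Category.assoc, cylIns_naturality, Category.assoc, h0]
    · rw [← Category.assoc, cylIns_naturality, Category.assoc, h1])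

/-- A map of simplicial sets is a weak homotopy equivalence iff it induces a bijection on
homotopy classes of maps into an arbitrary Kan complex. -/
def IsWeakHomotopyEquiv {X Y : SSet.{0}} (f : X ⟶ Y) : Prop :=
  ∀ K : SSet.{0}, SSet.KanComplex K → Function.Bijective (htpyPrecomp f K)

/-- Kan fibrations: right lifting property with respect to all horn inclusions. -/
def IsKanFibration {X Y : SSet.{0}} (p : X ⟶ Y) : Prop :=
  ∀ (n : ℕ) (i : Fin (n + 1)), HasLiftingProperty (SSet.horn n i).ι p

/-- The map of nerves induced by a functor. -/
def nerveMap' {A B : Type} [Category.{0} A] [Category.{0} B] (G : A ⥤ B) :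
    nerve A ⟶ nerve B :=
  nerveFunctor.map (X := Cat.of A) (Y := Cat.of B) G.toCatHom

end Homotopy

section Equivalences

/-- Weak equivalences of simplicial categories. -/
def SFunctor.IsWeakEquiv {C D : SCat} (F : SFunctor C D) : Prop :=
  IsHomotopyEquiv (nerveMap' F.pi0Functor) ∧
    ∀ x y : C.Obj, IsWeakHomotopyEquiv (F.homNat x y)

/-- Strong equivalences of simplicial categories. -/
def SFunctor.IsStrongEquiv {C D : SCat} (F : SFunctor C D) : Prop :=
  F.IsWeakEquiv ∧ F.pi0Functor.IsEquivalence

/-- Fibrant simplicial categories: all hom-simplicial sets are Kan complexes. -/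
def SCat.Fibrant (C : SCat) : Prop := ∀ x y : C.Obj, SSet.KanComplex (C.Hom x y)

/-- Weak groupoids: `π₀ C` is a groupoid. -/
def SCat.IsWeakGroupoid (C : SCat) : Prop :=
  ∀ (x y : C.Pi0) (f : x ⟶ y), IsIso f

/-- Fibrant groupoids. -/
def SCat.IsFibrantGroupoid (C : SCat) : Prop := C.Fibrant ∧ C.IsWeakGroupoid

/-- `0`-arrows of a simplicial category. -/
def SCat.hom₀ (C : SCat) (x y : C.Obj) : Type := (C.Hom x y).obj (op ⦋0⦌)

/-- A `0`-arrow is a homotopy equivalence if its class in `π₀ C` is an isomorphism. -/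
def SCat.IsHtpyEquivArrow (C : SCat) {x y : C.Obj} (α : C.hom₀ x y) : Prop :=
  IsIso (C := C.Pi0) (X := x) (Y := y) (Quot.mk _ α)

end Equivalences

section Cofibrations

/-- Right lifting property with respect to a class of maps. -/
def rlpOf {𝒞 : Type*} [Category 𝒞] (S : MorphismProperty 𝒞) : MorphismProperty 𝒞 :=
  fun _ _ p => ∀ {A B : 𝒞} (i : A ⟶ B), S i → HasLiftingProperty i p

/-- Left lifting property with respect to a class of maps. -/
def llpOf {𝒞 : Type*} [Category 𝒞] (T : MorphismProperty 𝒞) : MorphismProperty 𝒞 :=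
  fun _ _ i => ∀ {X Y : 𝒞} (p : X ⟶ Y), T p → HasLiftingProperty i p

/-- The constant simplicial set. -/
def constSSet (A : Type) : SSet.{0} := (Functor.const _).obj A

/-- The empty simplicial category. -/
def emptySCat : SCat where
  Obj := Empty
  Hom x _ := x.elim
  id x := x.elim
  comp {x} := x.elim
  id_comp {x} := x.elim
  comp_id {x} := x.elim
  assoc {x} := x.elim
  id_map x := x.elim
  comp_map {x} := x.elim

/-- The one-point simplicial category. -/
def ptSCat : SCat where
  Obj := PUnit
  Hom _ _ := constSSet PUnit
  id _ _ := PUnit.unit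
  comp _ _ _ := PUnit.unit
  id_comp _ _ := rfl
  comp_id _ _ := rfl
  assoc _ _ _ _ := rfl
  id_map := fun _ {_ _} _ => rfl
  comp_map := fun {_ _ _} {_ _} _ _ _ => rfl

/-- The unique simplicial functor from the empty simplicial category to the point. -/
def emptyToPt : emptySCat ⟶ ptSCat where
  obj x := x.elim
  map {x} := x.elim
  map_id x := x.elim
  map_comp {x} := x.elim
  map_natural {x} := x.elim

/-- Hom simplicial sets of the simplicial category `K₀₁`. -/
def K01Hom (K : SSet.{0}) : Bool → Bool → SSet.{0}
| false, false => constSSet PUnit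
| false, true  => K
| true,  false => constSSet Empty
| true,  true  => constSSet PUnit

/-- The simplicial category with two objects `0`, `1` and `Hom(0,1) = K`. -/
def K01 (K : SSet.{0}) : SCat where
  Obj := Bool
  Hom := K01Hom K
  id x k :=
    match x with
    | false => PUnit.unit
    | true => PUnit.unit
  comp {x y z} k f g :=
    match x, y, z, f, g with
    | false, false, false, _, _ => PUnit.unit
    | false, false, true,  _, g => g
    | false, true,  true,  f, _ => f
    | true,  true,  true,  _, _ => PUnit.unit
    | false, true,  false, _, g => Empty.elim g
    | true,  false, _,     f, _ => Empty.elim f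
    | true,  true,  false, _, g => Empty.elim g
  id_comp {x y} k f := by
    cases x <;> cases y <;> first | rfl | exact Empty.elim f
  comp_id {x y} k f := by
    cases x <;> cases y <;> first | rfl | exact Empty.elim f
  assoc {w x y z} k f g h := by
    cases w <;> cases x <;> cases y <;> cases z <;>
      first
        | rfl
        | exact Empty.elim f
        | exact Empty.elim g
        | exact Empty.elim h
  id_map := fun x {_ _} _ => by cases x <;> rfl
  comp_map {x y z} k l φ f g := by
    cases x <;> cases y <;> cases z <;>
      first
        | rfl
        | exact Empty.elim f
        | exact Empty.elim g

/-- The simplicial functor `K₀₁ → L₀₁` induced by a map `K ⟶ L`. -/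
def K01map {K L : SSet.{0}} (i : K ⟶ L) : K01 K ⟶ K01 L where
  obj := _root_.id
  map {x y} k f :=
    match x, y, f with
    | false, false, f => f
    | false, true,  f => i.app k f
    | true,  true,  f => f
    | true,  false, f => Empty.elim f
  map_id x k := by cases x <;> rfl
  map_comp {x y z} k f g := by
    cases x <;> cases y <;> cases z <;>
      first
        | rfl
        | exact Empty.elim f
        | exact Empty.elim g
  map_natural {x y} k l φ f := by
    cases x <;> cases y <;>
      first
        | rfl
        | exact congrArg (fun h => h f) (i.naturality φ)
        | exact Empty.elim f

/-- The generating cofibrations of `SCat`. -/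
def genCof : CategoryTheory.MorphismProperty SCat := fun _ _ u =>
  Nonempty (CategoryTheory.Arrow.mk u ≅ CategoryTheory.Arrow.mk emptyToPt) ∨
    ∃ (K L : SSet.{0}) (i : K ⟶ L), CategoryTheory.Mono i ∧
      Nonempty (CategoryTheory.Arrow.mk u ≅ CategoryTheory.Arrow.mk (K01map i))

/-- The cofibrations of `SCat`: the weakly saturated class generated by
the generating cofibrations, i.e. `llp (rlp (generators))`. -/
def Cofib : CategoryTheory.MorphismProperty SCat := llpOf (rlpOf genCof)

/-- The class of weak equivalences, as a morphism property. -/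
def WeakEq : CategoryTheory.MorphismProperty SCat := fun _ _ f => f.IsWeakEquiv

/-- The class of strong equivalences, as a morphism property. -/
def StrongEq : CategoryTheory.MorphismProperty SCat := fun _ _ f => f.IsStrongEquiv

end Cofibrations

section Model

/-- `f` is a retract of `g` in the arrow category. -/
def IsRetractOf {𝒞 : Type*} [Category 𝒞] {A B X Y : 𝒞} (f : A ⟶ B) (g : X ⟶ Y) : Prop :=
  ∃ (s : CategoryTheory.Arrow.mk f ⟶ CategoryTheory.Arrow.mk g)
    (r : CategoryTheory.Arrow.mk g ⟶ CategoryTheory.Arrow.mk f), s ≫ r = 𝟙 _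

/-- A model structure on a category, with prescribed classes of weak equivalences,
cofibrations and fibrations. -/
structure ModelStructure (𝒞 : Type*) [Category 𝒞]
    (W Cof Fib : CategoryTheory.MorphismProperty 𝒞) : Prop where
  weq_comp : ∀ {X Y Z : 𝒞} (f : X ⟶ Y) (g : Y ⟶ Z), W f → W g → W (f ≫ g)
  weq_of_postcomp : ∀ {X Y Z : 𝒞} (f : X ⟶ Y) (g : Y ⟶ Z), W g → W (f ≫ g) → W f
  weq_of_precomp : ∀ {X Y Z : 𝒞} (f : X ⟶ Y) (g : Y ⟶ Z), W f → W (f ≫ g) → W g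
  weq_retract : ∀ {A B X Y : 𝒞} (f : A ⟶ B) (g : X ⟶ Y), IsRetractOf f g → W g → W f
  cof_retract : ∀ {A B X Y : 𝒞} (f : A ⟶ B) (g : X ⟶ Y), IsRetractOf f g → Cof g → Cof f
  fib_retract : ∀ {A B X Y : 𝒞} (f : A ⟶ B) (g : X ⟶ Y), IsRetractOf f g → Fib g → Fib f
  lift_triv_cof : ∀ {A B X Y : 𝒞} (i : A ⟶ B) (p : X ⟶ Y),
    Cof i → W i → Fib p → HasLiftingProperty i p
  lift_triv_fib : ∀ {A B X Y : 𝒞} (i : A ⟶ B) (p : X ⟶ Y),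
    Cof i → Fib p → W p → HasLiftingProperty i p
  fact_triv_cof : ∀ {X Y : 𝒞} (f : X ⟶ Y), ∃ (Z : 𝒞) (i : X ⟶ Z) (p : Z ⟶ Y),
    Cof i ∧ W i ∧ Fib p ∧ i ≫ p = f
  fact_triv_fib : ∀ {X Y : 𝒞} (f : X ⟶ Y), ∃ (Z : 𝒞) (i : X ⟶ Z) (p : Z ⟶ Y),
    Cof i ∧ Fib p ∧ W p ∧ i ≫ p = f

end Model
section DeltaN

/-- The "gap" `(a,b) = {c | a < c < b}`. -/
def gapSet (n : ℕ) (a b : Fin (n + 1)) : Type :=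
  {c : Fin (n + 1) // a < c ∧ c < b}

instance (n : ℕ) (a b : Fin (n + 1)) : Fintype (gapSet n a b) := by
  unfold gapSet; infer_instance

/-- The constant `0` simplex of `Δ¹`. -/
def cst0 (k : SimplexCategoryᵒᵖ) : k.unop ⟶ (⦋1⦌ : SimplexCategory) :=
  SimplexCategory.const k.unop ⦋1⦌ 0

/-- The Hom simplicial set `I^{(a,b)}` of `Δ_𝔑ⁿ` (empty if `a > b`). -/
def DHom (n : ℕ) (a b : Fin (n + 1)) : SSet.{0} where
  obj k := PLift (a ≤ b) × (gapSet n a b → (k.unop ⟶ (⦋1⦌ : SimplexCategory)))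
  map φ := ↾fun f => ⟨f.1, fun c => φ.unop ≫ f.2 c⟩
  map_id k := by
    refine ConcreteCategory.hom_ext _ _ fun f => ?_; refine Prod.ext rfl ?_; funext c; simp
  map_comp φ ψ := by
    refine ConcreteCategory.hom_ext _ _ fun f => ?_; refine Prod.ext rfl ?_; funext c; simp

/-- Composition of arrows in `Δ_𝔑ⁿ`: insert the constant value `0` at the coordinate `b`. -/
def DCompFun {n : ℕ} {a b c : Fin (n + 1)} (k : SimplexCategoryᵒᵖ)
    (f2 : gapSet n a b → (k.unop ⟶ (⦋1⦌ : SimplexCategory)))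
    (g2 : gapSet n b c → (k.unop ⟶ (⦋1⦌ : SimplexCategory))) :
    gapSet n a c → (k.unop ⟶ (⦋1⦌ : SimplexCategory)) := fun x =>
  if h1 : x.1 < b then f2 ⟨x.1, x.2.1, h1⟩
  else if h2 : b < x.1 then g2 ⟨x.1, h2, x.2.2⟩
  else cst0 k

/-- The simplicial category `Δ_𝔑ⁿ`. -/
def DCat (n : ℕ) : SCat where
  Obj := Fin (n + 1)
  Hom := DHom n
  id a k := ⟨⟨le_refl a⟩, fun c => absurd (lt_trans c.2.1 c.2.2) (lt_irrefl a)⟩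
  comp {a b c} k f g := ⟨⟨f.1.down.trans g.1.down⟩, DCompFun k f.2 g.2⟩
  id_comp {a b} k f := by
    refine Prod.ext (Subsingleton.elim _ _) ?_
    funext c
    dsimp only
    unfold DCompFun
    rw [dif_neg (asymm c.2.1), dif_pos c.2.1]
    exact congrArg f.2 (Subtype.ext rfl)
  comp_id {a b} k f := by
    refine Prod.ext (Subsingleton.elim _ _) ?_
    funext c
    dsimp only
    unfold DCompFun
    rw [dif_pos c.2.2]
    exact congrArg f.2 (Subtype.ext rfl)
  assoc {w x y z} k f g h := by
    refine Prod.ext (Subsingleton.elim _ _) ?_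
    funext d
    have hxy := g.1.down
    dsimp only
    unfold DCompFun
    split_ifs <;>
      first
        | rfl
        | (exfalso; simp only [Fin.lt_def, Fin.le_def] at *; omega)
  id_map := fun a {_ _} φ => by
    refine Prod.ext rfl ?_
    funext c
    exact absurd (lt_trans c.2.1 c.2.2) (lt_irrefl a)
  comp_map := fun {a b c} {k l} φ f g => by
    refine Prod.ext rfl ?_
    funext x
    show φ.unop ≫ DCompFun k f.2 g.2 x = DCompFun l _ _ x
    unfold DCompFun
    split_ifs <;> rfl
end DeltaN
section DMapSec

/-- The map of cubes induced by a monotone map, on the level of hom-simplicial sets. -/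
def DMapHomFun {m n : SimplexCategory} (F : Fin (m.len + 1) →o Fin (n.len + 1))
    {a b : Fin (m.len + 1)} (k : SimplexCategoryᵒᵖ)
    (v : gapSet m.len a b → (k.unop ⟶ (⦋1⦌ : SimplexCategory)))
    (c : gapSet n.len (F a) (F b)) : k.unop ⟶ (⦋1⦌ : SimplexCategory) :=
  SimplexCategory.Hom.mk
    ⟨fun j => if ∀ x : gapSet m.len a b, F x.1 = c.1 → (v x).toOrderHom j = 1 then 1 else 0,
     by
      intro j j' hj
      dsimp only
      by_cases h1 : ∀ x : gapSet m.len a b, F x.1 = c.1 → (v x).toOrderHom j = 1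
      · rw [if_pos h1, if_pos]
        intro x hx
        have h3 := (v x).toOrderHom.monotone hj
        have h4 := h1 x hx
        have h5 := ((v x).toOrderHom j').isLt
        rw [Fin.ext_iff] at h4 ⊢
        rw [Fin.le_def] at h3
        simp only [Fin.val_one, SimplexCategory.len_mk] at *
        omega
      · rw [if_neg h1]
        exact Fin.zero_le _⟩


lemma DCompFun_lt {n : ℕ} {a b c : Fin (n + 1)} (k : SimplexCategoryᵒᵖ)
    (f2 : gapSet n a b → (k.unop ⟶ (⦋1⦌ : SimplexCategory)))
    (g2 : gapSet n b c → (k.unop ⟶ (⦋1⦌ : SimplexCategory)))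
    (x : gapSet n a c) (h : x.1 < b) :
    DCompFun k f2 g2 x = f2 ⟨x.1, x.2.1, h⟩ := by
  unfold DCompFun; rw [dif_pos h]

lemma DCompFun_gt {n : ℕ} {a b c : Fin (n + 1)} (k : SimplexCategoryᵒᵖ)
    (f2 : gapSet n a b → (k.unop ⟶ (⦋1⦌ : SimplexCategory)))
    (g2 : gapSet n b c → (k.unop ⟶ (⦋1⦌ : SimplexCategory)))
    (x : gapSet n a c) (h : b < x.1) :
    DCompFun k f2 g2 x = g2 ⟨x.1, h, x.2.2⟩ := by
  unfold DCompFun; rw [dif_neg (asymm h), dif_pos h]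

lemma DCompFun_mid {n : ℕ} {a b c : Fin (n + 1)} (k : SimplexCategoryᵒᵖ)
    (f2 : gapSet n a b → (k.unop ⟶ (⦋1⦌ : SimplexCategory)))
    (g2 : gapSet n b c → (k.unop ⟶ (⦋1⦌ : SimplexCategory)))
    (x : gapSet n a c) (h : x.1 = b) :
    DCompFun k f2 g2 x = cst0 k := by
  unfold DCompFun
  rw [dif_neg (by rw [h]; exact lt_irrefl _), dif_neg (by rw [h]; exact lt_irrefl _)]

/-- The simplicial functor `Δ_𝔑(f) : Δ_𝔑ᵐ → Δ_𝔑ⁿ` induced by `f : [m] → [n]`. -/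
def DMap {m n : SimplexCategory} (f : m ⟶ n) : SFunctor (DCat m.len) (DCat n.len) where
  obj := f.toOrderHom
  map {a b} k v := ⟨⟨f.toOrderHom.monotone v.1.down⟩, DMapHomFun f.toOrderHom k v.2⟩
  map_id a k := by
    refine Prod.ext (Subsingleton.elim _ _) ?_
    funext c
    exact absurd (lt_trans c.2.1 c.2.2) (lt_irrefl _)
  map_comp {a b c} k u v := by
    letI : ∀ a b : (DCat m.len).Obj, Fintype (gapSet m.len a b) := fun a b => instFintypeGapSet m.len a b
    refine Prod.ext (Subsingleton.elim _ _) ?_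
    funext x
    have hab := u.1.down
    have hbc := v.1.down
    dsimp only
    show DMapHomFun f.toOrderHom k (DCompFun k u.2 v.2) x =
      DCompFun k (DMapHomFun f.toOrderHom k u.2) (DMapHomFun f.toOrderHom k v.2) x
    rcases lt_trichotomy x.1 (f.toOrderHom b) with hx | hx | hx
    · rw [DCompFun_lt _ _ _ _ hx]
      apply SimplexCategory.Hom.ext _ _
      apply OrderHom.ext
      funext j
      refine if_congr ⟨?_, ?_⟩ rfl rfl
      · intro hc s hs
        have hsc : s.1 < c := lt_of_lt_of_le s.2.2 hbc
        have h0 := hc ⟨s.1, s.2.1, hsc⟩ hs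
        rw [DCompFun_lt k u.2 v.2 ⟨s.1, s.2.1, hsc⟩ s.2.2] at h0
        convert h0 using 3 <;> rfl
      · intro hc t ht
        have htb : t.1 < b := by
          by_contra hno
          have h1 : f.toOrderHom b ≤ f.toOrderHom t.1 := f.toOrderHom.monotone (not_lt.mp hno)
          rw [ht] at h1
          exact absurd hx (not_lt.mpr h1)
        rw [DCompFun_lt _ _ _ _ htb]
        exact hc ⟨t.1, t.2.1, htb⟩ ht
    · have hafb : f.toOrderHom a < f.toOrderHom b := by rw [← hx]; exact x.2.1
      have hfbc : f.toOrderHom b < f.toOrderHom c := by rw [← hx]; exact x.2.2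
      have hab' : @LT.lt (Fin (m.len + 1)) _ a b := by
        rcases lt_or_eq_of_le hab with h | h
        · exact h
        · rw [h] at hafb; exact absurd hafb (lt_irrefl _)
      have hbc' : @LT.lt (Fin (m.len + 1)) _ b c := by
        rcases lt_or_eq_of_le hbc with h | h
        · exact h
        · rw [h] at hfbc; exact absurd hfbc (lt_irrefl _)
      rw [DCompFun_mid _ _ _ _ hx]
      apply SimplexCategory.Hom.ext _ _
      apply OrderHom.ext
      funext j
      have hnot : ¬ ∀ t : gapSet m.len a c, f.toOrderHom t.1 = x.1 →
          (SimplexCategory.Hom.toOrderHom (DCompFun k u.2 v.2 t)) j = 1 := by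
        intro hcond
        have h0 := hcond ⟨b, hab', hbc'⟩ hx.symm
        rw [DCompFun_mid k u.2 v.2 ⟨b, hab', hbc'⟩ rfl] at h0
        have h1 : (SimplexCategory.Hom.toOrderHom (cst0 k)) j = 0 := rfl
        rw [h1] at h0
        have h2 := congrArg Fin.val h0
        simp [SimplexCategory.len_mk] at h2
      show (if ∀ t : gapSet m.len a c, f.toOrderHom t.1 = x.1 →
          (SimplexCategory.Hom.toOrderHom (DCompFun k u.2 v.2 t)) j = 1
        then (1 : Fin (⦋1⦌.len + 1)) else 0) = (SimplexCategory.Hom.toOrderHom (cst0 k)) j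
      rw [if_neg hnot]
      rfl
    · rw [DCompFun_gt _ _ _ _ hx]
      apply SimplexCategory.Hom.ext _ _
      apply OrderHom.ext
      funext j
      refine if_congr ⟨?_, ?_⟩ rfl rfl
      · intro hc s hs
        have hsa : @LT.lt (Fin (m.len + 1)) _ a s.1 := lt_of_le_of_lt hab s.2.1
        have h0 := hc ⟨s.1, hsa, s.2.2⟩ hs
        rw [DCompFun_gt k u.2 v.2 ⟨s.1, hsa, s.2.2⟩ s.2.1] at h0
        convert h0 using 3 <;> rfl
      · intro hc t ht
        have htb : @LT.lt (Fin (m.len + 1)) _ b t.1 := by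
          by_contra hno
          have h1 : f.toOrderHom t.1 ≤ f.toOrderHom b := f.toOrderHom.monotone (not_lt.mp hno)
          rw [ht] at h1
          exact absurd hx (not_lt.mpr h1)
        rw [DCompFun_gt _ _ _ _ htb]
        exact hc ⟨t.1, htb, t.2.2⟩ ht
  map_natural {a b} k l φ v := by
    refine Prod.ext rfl ?_
    funext c
    rfl

end DMapSec
section Cosimplicial

lemma fin2_ite_eq_one {P : Prop} [Decidable P] :
    ((if P then (1 : Fin ((⦋1⦌ : SimplexCategory).len + 1)) else 0) = 1) ↔ P := by
  split_ifs with h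
  · exact ⟨fun _ => h, fun _ => rfl⟩
  · refine ⟨fun h0 => ?_, fun hp => absurd hp h⟩
    have h2 := congrArg Fin.val h0
    simp [SimplexCategory.len_mk] at h2

lemma DMap_id (m : SimplexCategory) : DMap (𝟙 m) = SFunctor.id' (DCat m.len) := by
  letI : ∀ a b : (DCat m.len).Obj, Fintype (gapSet m.len a b) := fun a b => instFintypeGapSet m.len a b
  apply SFunctor.ext'
  · rfl
  · intro x y k v
    apply heq_of_eq
    refine Prod.ext (Subsingleton.elim _ _) ?_
    funext c
    apply SimplexCategory.Hom.ext _ _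
    apply OrderHom.ext
    funext j
    show (if ∀ t : gapSet m.len x y, (𝟙 m : m ⟶ m).toOrderHom t.1 = c.1 →
        (SimplexCategory.Hom.toOrderHom (v.2 t)) j = 1
      then (1 : Fin ((⦋1⦌ : SimplexCategory).len + 1)) else 0)
      = (SimplexCategory.Hom.toOrderHom (v.2 c)) j
    by_cases hv : (SimplexCategory.Hom.toOrderHom (v.2 c)) j = 1
    · rw [if_pos, hv]
      intro t ht
      have htc : t = c := Subtype.ext ht
      rw [htc]; exact hv
    · rw [if_neg]
      · have h2 := ((SimplexCategory.Hom.toOrderHom (v.2 c)) j).isLt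
        rw [Fin.ext_iff] at hv ⊢
        simp only [SimplexCategory.len_mk, Fin.val_one, Fin.val_zero] at *
        omega
      · intro hcond; exact hv (hcond c rfl)

lemma DMap_comp {l m n : SimplexCategory} (f : l ⟶ m) (g : m ⟶ n) :
    DMap (f ≫ g) = (DMap f).comp' (DMap g) := by
  letI : ∀ a b : (DCat l.len).Obj, Fintype (gapSet l.len a b) := fun a b => instFintypeGapSet l.len a b
  apply SFunctor.ext'
  · rfl
  · intro a b k v
    apply heq_of_eq
    refine Prod.ext (Subsingleton.elim _ _) ?_
    funext c
    apply SimplexCategory.Hom.ext _ _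
    apply OrderHom.ext
    funext j
    show (if ∀ t : gapSet l.len a b, (f ≫ g).toOrderHom t.1 = c.1 →
        (SimplexCategory.Hom.toOrderHom (v.2 t)) j = 1
      then (1 : Fin ((⦋1⦌ : SimplexCategory).len + 1)) else 0)
      = (if ∀ s : gapSet m.len (f.toOrderHom a) (f.toOrderHom b),
            g.toOrderHom s.1 = c.1 →
            (SimplexCategory.Hom.toOrderHom (DMapHomFun f.toOrderHom k v.2 s)) j = 1
         then (1 : Fin ((⦋1⦌ : SimplexCategory).len + 1)) else 0)
    refine if_congr ⟨?_, ?_⟩ rfl rfl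
    · intro hP s hs
      rw [show (SimplexCategory.Hom.toOrderHom (DMapHomFun f.toOrderHom k v.2 s)) j
          = (if ∀ t : gapSet l.len a b, f.toOrderHom t.1 = s.1 →
              (SimplexCategory.Hom.toOrderHom (v.2 t)) j = 1
             then (1 : Fin ((⦋1⦌ : SimplexCategory).len + 1)) else 0) from rfl,
        fin2_ite_eq_one]
      intro t ht
      refine hP t ?_
      show g.toOrderHom (f.toOrderHom t.1) = c.1
      rw [ht, hs]
    · intro hQ t ht
      have ht' : g.toOrderHom (f.toOrderHom t.1) = c.1 := ht
      have hfa : f.toOrderHom a < f.toOrderHom t.1 := by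
        rcases lt_or_eq_of_le (f.toOrderHom.monotone (le_of_lt t.2.1)) with h | h
        · exact h
        · exfalso
          have hc1 : g.toOrderHom (f.toOrderHom t.1) < c.1 := by
            rw [← h]; exact c.2.1
          rw [ht'] at hc1
          exact lt_irrefl _ hc1
      have hfb : f.toOrderHom t.1 < f.toOrderHom b := by
        rcases lt_or_eq_of_le (f.toOrderHom.monotone (le_of_lt t.2.2)) with h | h
        · exact h
        · exfalso
          have hc1 : c.1 < g.toOrderHom (f.toOrderHom t.1) := by
            rw [h]; exact c.2.2
          rw [ht'] at hc1
          exact lt_irrefl _ hc1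
      have h0 := hQ ⟨f.toOrderHom t.1, hfa, hfb⟩ ht'
      rw [show (SimplexCategory.Hom.toOrderHom
          (DMapHomFun f.toOrderHom k v.2 ⟨f.toOrderHom t.1, hfa, hfb⟩)) j
          = (if ∀ t' : gapSet l.len a b, f.toOrderHom t'.1 = f.toOrderHom t.1 →
              (SimplexCategory.Hom.toOrderHom (v.2 t')) j = 1
             then (1 : Fin ((⦋1⦌ : SimplexCategory).len + 1)) else 0) from rfl,
        fin2_ite_eq_one] at h0
      exact h0 t rfl

/-- The cosimplicial object `n ↦ Δ_𝔑ⁿ` in `SCat`. -/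
def DCatS : CategoryTheory.CosimplicialObject SCat where
  obj m := DCat m.len
  map f := DMap f
  map_id m := DMap_id m
  map_comp f g := DMap_comp f g

/-- The homotopy coherent nerve of a simplicial category. -/
def hcNerveObj (C : SCat) : SSet.{0} where
  obj k := SFunctor (DCat k.unop.len) C
  map φ := ↾fun F => (DMap φ.unop).comp' F
  map_id k := by
    ext F
    show (DMap (𝟙 k.unop)).comp' F = F
    rw [DMap_id]
    rfl
  map_comp {k l p} φ ψ := by
    ext F
    show (DMap (ψ.unop ≫ φ.unop)).comp' F = (DMap ψ.unop).comp' ((DMap φ.unop).comp' F)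
    rw [DMap_comp]
    rfl

/-- The homotopy coherent nerve functor `𝔑 : sCat → sSet`. -/
def hcNerve : SCat ⥤ SSet.{0} where
  obj := hcNerveObj
  map {C D} F :=
    { app := fun k => ↾fun G => G.comp' F
      naturality := fun k l φ => rfl }
  map_id C := by
    apply NatTrans.ext
    funext k; ext G
    show G.comp' (SFunctor.id' C) = G
    rfl
  map_comp F G := by
    apply NatTrans.ext
    funext k; ext H
    rfl

end Cosimplicial

/-!
By adjunction, `Δ_𝔑(∂Δⁿ) → Δ_𝔑ⁿ` lifts against `p` iff `∂Δⁿ → Δⁿ` lifts against `𝔑 p`.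
Such a lifting problem is a functor `Δ_𝔑ⁿ → Y` together with compatible lifts to `X` of its
restrictions to the proper faces of `Δⁿ`, and a solution is a functor `H : Δ_𝔑ⁿ → X`.

The objects of `H` and all its hom-maps except the one on `Hom(0, n) = I^{n-1}` are forced: an
`r`-simplex of the cube `Hom(a, b)` with `(a, b) ≠ (0, n)` is the image of a simplex of the face
`{a, …, b}`, and the given lift of that face determines its value. In general a simplex `v` of a
cube that is constant `1` off the image of an injective face `φ` has a value read off from the
lift on `φ`; it does not depend on `φ`, because `v` is also constant `1` off the intersection of
two such images. On the boundary of `I^{n-1}` the values of `H` are thereby prescribed: through the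
face `d_c` where the coordinate `c` is constant `1`, and as the composite through the vertex `c`
where it is constant `0`. The generating cofibration `(∂I^{n-1})₀₁ → (I^{n-1})₀₁` extends them to
all of `I^{n-1}`, over `Y`. For `n = 0` one lifts against `∅ → *` instead.
-/

namespace SimplexCategory

variable {N : ℕ}

lemma Hom.ext_apply {x y : SimplexCategory} {f g : x ⟶ y}
    (h : ∀ i, f.toOrderHom i = g.toOrderHom i) : f = g :=
  Hom.ext _ _ (OrderHom.ext _ _ (funext h))

def intervalIncl (a b : Fin (N + 1)) (hab : a ≤ b) : ⦋(b : ℕ) - a⦌ ⟶ ⦋N⦌ :=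
  Hom.mk ⟨fun i => ⟨a + i.1, by have := i.isLt; have := b.isLt; simp only [len_mk] at *; omega⟩,
    fun _ _ hij => Fin.mk_le_mk.mpr (Nat.add_le_add_left hij _)⟩

lemma intervalIncl_strictMono (a b : Fin (N + 1)) (hab : a ≤ b) :
    StrictMono (intervalIncl a b hab).toOrderHom :=
  fun _ _ hij => Fin.mk_lt_mk.mpr (Nat.add_lt_add_left hij _)

lemma intervalIncl_zero (a b : Fin (N + 1)) (hab : a ≤ b) :
    (intervalIncl a b hab).toOrderHom 0 = a :=
  Fin.ext (Nat.add_zero _)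

lemma intervalIncl_last (a b : Fin (N + 1)) (hab : a ≤ b) :
    (intervalIncl a b hab).toOrderHom (Fin.last _) = b :=
  Fin.ext (Nat.add_sub_of_le hab)

lemma intervalIncl_not_surjective (a b : Fin (N + 1)) (hab : a ≤ b)
    (h : ¬(a = 0 ∧ b = Fin.last N)) :
    ¬Function.Surjective (intervalIncl a b hab).toOrderHom := by
  intro hsurj
  obtain ⟨x, hx⟩ := hsurj 0
  obtain ⟨y, hy⟩ := hsurj (Fin.last N)
  have hx' : (a : ℕ) + x = 0 := congrArg Fin.val hx
  have hy' : (a : ℕ) + y = N := congrArg Fin.val hy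
  have := y.isLt
  simp only [len_mk] at this
  exact h ⟨Fin.ext (by rw [Fin.val_zero]; omega), Fin.ext (by rw [Fin.val_last]; omega)⟩

lemma δ_strictMono (c : Fin (N + 2)) : StrictMono (δ c).toOrderHom :=
  Fin.strictMono_succAbove c

lemma δ_not_surjective (c : Fin (N + 2)) : ¬Function.Surjective (δ c).toOrderHom :=
  fun h => (h c).elim fun x hx => Fin.succAbove_ne c x hx

lemma δ_apply_zero {c : Fin (N + 2)} (hc : 0 < c) : (δ c).toOrderHom 0 = 0 :=
  Fin.succAbove_ne_zero_zero hc.ne'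

lemma δ_apply_last {c : Fin (N + 2)} (hc : c < Fin.last (N + 1)) :
    (δ c).toOrderHom (Fin.last N) = Fin.last (N + 1) :=
  Fin.succAbove_ne_last_last hc.ne

lemma const_not_surjective (a : Fin (N + 2)) :
    ¬Function.Surjective (const ⦋0⦌ ⦋N + 1⦌ a).toOrderHom := fun h => by
  obtain ⟨x, hx⟩ := h (Fin.last (N + 1))
  obtain ⟨y, hy⟩ := h 0
  exact absurd (congrArg Fin.val (hx.symm.trans hy)) (by simp)

lemma exists_strictMono_range_eq (S : Finset (Fin (N + 1))) (hS : S.Nonempty) :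
    ∃ (l : ℕ) (χ : ⦋l⦌ ⟶ ⦋N⦌), StrictMono χ.toOrderHom ∧ Set.range χ.toOrderHom = S := by
  have hcard : S.card = S.card - 1 + 1 := (Nat.succ_pred_eq_of_pos hS.card_pos).symm
  exact ⟨S.card - 1, Hom.mk (S.orderEmbOfFin hcard).toOrderHom,
    (S.orderEmbOfFin hcard).strictMono, S.range_orderEmbOfFin hcard⟩

lemma exists_comp_eq_of_range_subset {l m : SimplexCategory} (χ : l ⟶ ⦋N⦌) (φ : m ⟶ ⦋N⦌)
    (hφ : StrictMono φ.toOrderHom) (h : Set.range χ.toOrderHom ⊆ Set.range φ.toOrderHom) :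
    ∃ χ' : l ⟶ m, χ' ≫ φ = χ := by
  choose f hf using fun i => h ⟨i, rfl⟩
  refine ⟨Hom.mk ⟨f, fun i j hij => hφ.le_iff_le.mp ?_⟩, Hom.ext_apply hf⟩
  rw [hf, hf]
  exact χ.toOrderHom.monotone hij

lemma exists_strictMono_range_eq_inter {m m' : SimplexCategory} (φ : m ⟶ ⦋N⦌) (ψ : m' ⟶ ⦋N⦌)
    (hφ : StrictMono φ.toOrderHom) (hψ : StrictMono ψ.toOrderHom)
    (h : (Set.range φ.toOrderHom ∩ Set.range ψ.toOrderHom).Nonempty) :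
    ∃ (l : ℕ) (χ : ⦋l⦌ ⟶ ⦋N⦌) (χ₁ : ⦋l⦌ ⟶ m) (χ₂ : ⦋l⦌ ⟶ m'), StrictMono χ.toOrderHom ∧
      χ₁ ≫ φ = χ ∧ χ₂ ≫ ψ = χ ∧
      Set.range χ.toOrderHom = Set.range φ.toOrderHom ∩ Set.range ψ.toOrderHom := by
  classical
  obtain ⟨l, χ, hχ, hrange⟩ := exists_strictMono_range_eq
    (Finset.univ.filter (· ∈ Set.range φ.toOrderHom ∩ Set.range ψ.toOrderHom))
    (h.elim fun a ha => ⟨a, by simpa using ha⟩)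
  replace hrange :
      Set.range χ.toOrderHom = Set.range φ.toOrderHom ∩ Set.range ψ.toOrderHom := by
    rw [hrange]; ext; simp
  obtain ⟨χ₁, hχ₁⟩ := exists_comp_eq_of_range_subset χ φ hφ (hrange ▸ Set.inter_subset_left)
  obtain ⟨χ₂, hχ₂⟩ := exists_comp_eq_of_range_subset χ ψ hψ (hrange ▸ Set.inter_subset_right)
  exact ⟨l, χ, χ₁, χ₂, hχ, hχ₁, hχ₂, hrange⟩

lemma apply_eq_of_comp_eq {l m : SimplexCategory} {χ : l ⟶ ⦋N⦌} {ψ : m ⟶ ⦋N⦌} {χ' : l ⟶ m}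
    (hψ : StrictMono ψ.toOrderHom) (h : χ' ≫ ψ = χ) {i : Fin (l.len + 1)}
    {x : Fin (m.len + 1)} (hx : ψ.toOrderHom x = χ.toOrderHom i) : χ'.toOrderHom i = x :=
  hψ.injective (hx.symm ▸ h ▸ rfl)

lemma mem_gap_of_strictMono {l m : SimplexCategory} (χ : l ⟶ m) (hs : StrictMono χ.toOrderHom)
    {a₀ b₀ : Fin (l.len + 1)} {c : Fin (m.len + 1)} (h1 : χ.toOrderHom a₀ < c)
    (h2 : c < χ.toOrderHom b₀) {x} (hx : χ.toOrderHom x = c) : a₀ < x ∧ x < b₀ :=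
  ⟨hs.lt_iff_lt.mp (hx ▸ h1), hs.lt_iff_lt.mp (hx ▸ h2)⟩

end SimplexCategory

section CastHom

variable {X : SCat}

def castHom {x x' y y' : X.Obj} (hx : x = x') (hy : y = y') {k : SimplexCategoryᵒᵖ}
    (f : (X.Hom x y).obj k) : (X.Hom x' y').obj k :=
  hx ▸ hy ▸ f

lemma castHom_rfl {x y : X.Obj} (hx : x = x) (hy : y = y) {k : SimplexCategoryᵒᵖ}
    (f : (X.Hom x y).obj k) : castHom hx hy f = f := rfl

lemma castHom_heq {x x' y y' : X.Obj} (hx : x = x') (hy : y = y') {k : SimplexCategoryᵒᵖ}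
    (f : (X.Hom x y).obj k) : HEq (castHom hx hy f) f := by
  subst hx hy; rfl

lemma castHom_castHom {x x' y y' : X.Obj} (hx : x = x') (hy : y = y') (hx' : x' = x)
    (hy' : y' = y) {k : SimplexCategoryᵒᵖ} (f : (X.Hom x y).obj k) :
    castHom hx' hy' (castHom hx hy f) = f := by
  subst hx hy; rfl

lemma castHom_comp {x x' y y' z z' : X.Obj} (hx : x = x') (hy : y = y') (hz : z = z')
    {k : SimplexCategoryᵒᵖ} (f : (X.Hom x y).obj k) (g : (X.Hom y z).obj k) :
    X.comp k (castHom hx hy f) (castHom hy hz g) = castHom hx hz (X.comp k f g) := by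
  subst hx hy hz; rfl

lemma castHom_map {x x' y y' : X.Obj} (hx : x = x') (hy : y = y') {k l : SimplexCategoryᵒᵖ}
    (θ : k ⟶ l) (f : (X.Hom x y).obj k) :
    (X.Hom x' y').map θ (castHom hx hy f) = castHom hx hy ((X.Hom x y).map θ f) := by
  subst hx hy; rfl

lemma castHom_id {x x' : X.Obj} (hx : x = x') (k : SimplexCategoryᵒᵖ) :
    castHom hx hx (X.id x k) = X.id x' k := by
  subst hx; rfl

lemma SFunctor.map_castHom {Y : SCat} (F : SFunctor X Y) {x x' y y' : X.Obj} (hx : x = x')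
    (hy : y = y') {k : SimplexCategoryᵒᵖ} (f : (X.Hom x y).obj k) :
    F.map k (castHom hx hy f) =
      castHom (congrArg F.obj hx) (congrArg F.obj hy) (F.map k f) := by
  subst hx hy; rfl

lemma SFunctor.congr_obj {Y : SCat} {F G : SFunctor X Y} (h : F = G) (x : X.Obj) :
    F.obj x = G.obj x := by
  subst h; rfl

lemma SFunctor.congr_map {Y : SCat} {F G : SFunctor X Y} (h : F = G) (x y : X.Obj)
    (k : SimplexCategoryᵒᵖ) (f : (X.Hom x y).obj k) :
    G.map k f = castHom (SFunctor.congr_obj h x) (SFunctor.congr_obj h y) (F.map k f) := by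
  subst h; rfl

lemma SFunctor.ext_castHom {Y : SCat} {F G : SFunctor X Y} (h : ∀ x, F.obj x = G.obj x)
    (h' : ∀ (x y : X.Obj) (k) (f : (X.Hom x y).obj k),
      castHom (h x) (h y) (F.map (x := x) (y := y) k f) = G.map k f) : F = G :=
  SFunctor.ext' (funext h) fun x y k f =>
    (castHom_heq (h x) (h y) (F.map k f)).symm.trans (heq_of_eq (h' x y k f))

end CastHom

section Cube

open SimplexCategory

def cst1 (k : SimplexCategoryᵒᵖ) : k.unop ⟶ ⦋1⦌ :=
  const k.unop ⦋1⦌ 1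

lemma comp_cst0 {k l : SimplexCategoryᵒᵖ} (θ : k ⟶ l) : θ.unop ≫ cst0 k = cst0 l :=
  Hom.ext_apply fun _ => rfl

lemma comp_cst1 {k l : SimplexCategoryᵒᵖ} (θ : k ⟶ l) : θ.unop ≫ cst1 k = cst1 l :=
  Hom.ext_apply fun _ => rfl

lemma cst1_apply (k : SimplexCategoryᵒᵖ) (j) : (cst1 k).toOrderHom j = 1 := rfl

lemma cst0_ne_cst1 (k : SimplexCategoryᵒᵖ) : cst0 k ≠ cst1 k := fun h => by
  simpa [cst0, cst1] using congrArg (fun f => (Hom.toOrderHom f) 0) h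

lemma fin2_ite_eq_self (t : Fin (len ⦋1⦌ + 1)) :
    (if t = 1 then (1 : Fin (len ⦋1⦌ + 1)) else 0) = t := by
  revert t; decide

lemma DMapHomFun_apply {m n : SimplexCategory} (F : Fin (m.len + 1) →o Fin (n.len + 1))
    {a b : Fin (m.len + 1)} (k : SimplexCategoryᵒᵖ)
    (v : gapSet m.len a b → (k.unop ⟶ ⦋1⦌)) (c : gapSet n.len (F a) (F b)) (j) :
    (DMapHomFun F k v c).toOrderHom j =
      if ∀ x : gapSet m.len a b, F x.1 = c.1 → (v x).toOrderHom j = 1 then 1 else 0 := rfl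

def gapSet.map {N : ℕ} {m : SimplexCategory} (φ : m ⟶ ⦋N⦌) (hs : StrictMono φ.toOrderHom)
    {a₀ b₀ : Fin (m.len + 1)} {a b : Fin (N + 1)} (ha : φ.toOrderHom a₀ = a)
    (hb : φ.toOrderHom b₀ = b) (x : gapSet m.len a₀ b₀) : gapSet N a b :=
  ⟨φ.toOrderHom x.1, ha ▸ hs x.2.1, hb ▸ hs x.2.2⟩

namespace DHom

variable {N : ℕ}

lemma ext {a b : Fin (N + 1)} {k : SimplexCategoryᵒᵖ} {v w : (DHom N a b).obj k}
    (h : ∀ c, v.2 c = w.2 c) : v = w :=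
  Prod.ext (Subsingleton.elim _ _) (funext h)

instance (a : Fin (N + 1)) (k : SimplexCategoryᵒᵖ) : Subsingleton ((DHom N a a).obj k) :=
  ⟨fun _ _ => DHom.ext fun c => absurd (c.2.1.trans c.2.2) (lt_irrefl a)⟩

def restrict {a b : Fin (N + 1)} (a' b' : Fin (N + 1)) (h1 : a ≤ a') (h2 : b' ≤ b)
    (h3 : a' ≤ b') {k : SimplexCategoryᵒᵖ} (v : (DHom N a b).obj k) : (DHom N a' b').obj k :=
  ⟨⟨h3⟩, fun x => v.2 ⟨x.1, h1.trans_lt x.2.1, x.2.2.trans_le h2⟩⟩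

lemma restrict_map {a b : Fin (N + 1)} (a' b' : Fin (N + 1)) (h1 : a ≤ a') (h2 : b' ≤ b)
    (h3 : a' ≤ b') {k k' : SimplexCategoryᵒᵖ} (θ : k ⟶ k') (v : (DHom N a b).obj k) :
    restrict a' b' h1 h2 h3 ((DHom N a b).map θ v) =
      (DHom N a' b').map θ (restrict a' b' h1 h2 h3 v) :=
  DHom.ext fun _ => rfl

lemma restrict_comp_left {a b c : Fin (N + 1)} (hab : a ≤ b) (hbc : b ≤ c)
    {k : SimplexCategoryᵒᵖ} (v : (DHom N a b).obj k) (w : (DHom N b c).obj k) :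
    restrict a b le_rfl hbc hab ((DCat N).comp k v w) = v :=
  DHom.ext fun x => (DCompFun_lt k v.2 w.2 _ x.2.2).trans (congrArg v.2 (Subtype.ext rfl))

lemma restrict_comp_right {a b c : Fin (N + 1)} (hab : a ≤ b) (hbc : b ≤ c)
    {k : SimplexCategoryᵒᵖ} (v : (DHom N a b).obj k) (w : (DHom N b c).obj k) :
    restrict b c hab le_rfl hbc ((DCat N).comp k v w) = w :=
  DHom.ext fun x => (DCompFun_gt k v.2 w.2 _ x.2.1).trans (congrArg w.2 (Subtype.ext rfl))

lemma eq_comp_restrict {a d b : Fin (N + 1)} (h1 : a < d) (h2 : d < b)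
    {k : SimplexCategoryᵒᵖ} (v : (DHom N a b).obj k) (h0 : v.2 ⟨d, h1, h2⟩ = cst0 k) :
    v = (DCat N).comp k (restrict a d le_rfl h2.le h1.le v)
      (restrict d b h1.le le_rfl h2.le v) := by
  refine DHom.ext fun c => ?_
  change v.2 c = DCompFun k (restrict a d le_rfl h2.le h1.le v).2
    (restrict d b h1.le le_rfl h2.le v).2 c
  rcases lt_trichotomy c.1 d with h | h | h
  · rw [DCompFun_lt _ _ _ c h]
    exact congrArg v.2 (Subtype.ext rfl)
  · rw [DCompFun_mid _ _ _ c h, show c = ⟨d, h1, h2⟩ from Subtype.ext h, h0]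
  · rw [DCompFun_gt _ _ _ c h]
    exact congrArg v.2 (Subtype.ext rfl)

def boundary (N : ℕ) (a b : Fin (N + 1)) : (DHom N a b).Subcomplex where
  obj k := {v | ∃ c, v.2 c = cst1 k ∨ v.2 c = cst0 k}
  map θ := by
    rintro v ⟨c, hc | hc⟩
    · exact ⟨c, Or.inl ((congrArg _ hc).trans (comp_cst1 θ))⟩
    · exact ⟨c, Or.inr ((congrArg _ hc).trans (comp_cst0 θ))⟩

variable {m : SimplexCategory}

def pull (φ : m ⟶ ⦋N⦌) (hs : StrictMono φ.toOrderHom) {a₀ b₀ : Fin (m.len + 1)}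
    {a b : Fin (N + 1)} (ha : φ.toOrderHom a₀ = a) (hb : φ.toOrderHom b₀ = b)
    {k : SimplexCategoryᵒᵖ} (v : (DHom N a b).obj k) : (DHom m.len a₀ b₀).obj k :=
  ⟨⟨hs.le_iff_le.mp (ha ▸ hb ▸ v.1.down)⟩, fun x => v.2 (gapSet.map φ hs ha hb x)⟩

/-- By `DMap_map_pull` and `supportedOn_DMap_map`, for injective `φ` this says that `v` lies in
the image of `(DMap φ).map`. -/
def SupportedOn (φ : m ⟶ ⦋N⦌) {a b : Fin (N + 1)} {k : SimplexCategoryᵒᵖ}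
    (v : (DHom N a b).obj k) : Prop :=
  ∀ c : gapSet N a b, (∀ x, φ.toOrderHom x ≠ c.1) → v.2 c = cst1 k

lemma pull_map (φ : m ⟶ ⦋N⦌) (hs : StrictMono φ.toOrderHom) {a₀ b₀ : Fin (m.len + 1)}
    {a b : Fin (N + 1)} (ha : φ.toOrderHom a₀ = a) (hb : φ.toOrderHom b₀ = b)
    {k k' : SimplexCategoryᵒᵖ} (θ : k ⟶ k') (v : (DHom N a b).obj k) :
    pull φ hs ha hb ((DHom N a b).map θ v) = (DHom m.len a₀ b₀).map θ (pull φ hs ha hb v) :=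
  DHom.ext fun _ => rfl

lemma DMap_map_pull (φ : m ⟶ ⦋N⦌) (hs : StrictMono φ.toOrderHom) {a₀ b₀ : Fin (m.len + 1)}
    {a b : Fin (N + 1)} (ha : φ.toOrderHom a₀ = a) (hb : φ.toOrderHom b₀ = b)
    {k : SimplexCategoryᵒᵖ} (v : (DHom N a b).obj k) (hv : SupportedOn φ v) :
    (DMap φ).map k (pull φ hs ha hb v) = castHom (X := DCat N) ha.symm hb.symm v := by
  subst ha hb
  refine DHom.ext fun c => Hom.ext_apply fun j => ?_
  change (DMapHomFun φ.toOrderHom k (pull φ hs rfl rfl v).2 c).toOrderHom j = _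
  erw [DMapHomFun_apply, castHom_rfl]
  by_cases hc : ∃ x, φ.toOrderHom x = c.1
  · obtain ⟨x, hx⟩ := hc
    obtain ⟨h1, h2⟩ := mem_gap_of_strictMono φ hs c.2.1 c.2.2 hx
    have hmap : ∀ y : gapSet m.len a₀ b₀, φ.toOrderHom y.1 = c.1 →
        gapSet.map φ hs rfl rfl y = c := fun y hy => Subtype.ext hy
    have hiff : (∀ y : gapSet m.len a₀ b₀, φ.toOrderHom y.1 = c.1 →
        ((pull φ hs rfl rfl v).2 y).toOrderHom j = 1) ↔ (v.2 c).toOrderHom j = 1 :=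
      ⟨fun h => hmap ⟨x, h1, h2⟩ hx ▸ h ⟨x, h1, h2⟩ hx, fun h y hy => by
        change (v.2 (gapSet.map φ hs rfl rfl y)).toOrderHom j = 1
        rwa [hmap y hy]⟩
    rw [if_congr hiff rfl rfl, fin2_ite_eq_self]
  · push Not at hc
    rw [if_pos fun y hy => absurd hy (hc y.1), hv c hc, cst1_apply]

lemma pull_DMap_map (φ : m ⟶ ⦋N⦌) (hs : StrictMono φ.toOrderHom) {a₀ b₀ : Fin (m.len + 1)}
    {k : SimplexCategoryᵒᵖ} (u : (DHom m.len a₀ b₀).obj k) :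
    pull φ hs rfl rfl ((DMap φ).map (x := a₀) (y := b₀) k u) = u := by
  refine DHom.ext fun c => Hom.ext_apply fun j => ?_
  change (DMapHomFun φ.toOrderHom k u.2 (gapSet.map φ hs rfl rfl c)).toOrderHom j = _
  have hiff : (∀ x : gapSet m.len a₀ b₀, φ.toOrderHom x.1 = φ.toOrderHom c.1 →
      (u.2 x).toOrderHom j = 1) ↔ (u.2 c).toOrderHom j = 1 :=
    ⟨fun h => h c rfl, fun h y hy => Subtype.ext (hs.injective hy) ▸ h⟩
  erw [DMapHomFun_apply, if_congr hiff rfl rfl, fin2_ite_eq_self]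

lemma supportedOn_DMap_map (φ : m ⟶ ⦋N⦌) {a₀ b₀ : Fin (m.len + 1)}
    {k : SimplexCategoryᵒᵖ} (u : (DHom m.len a₀ b₀).obj k) :
    SupportedOn φ ((DMap φ).map (x := a₀) (y := b₀) k u) :=
  fun c hc => Hom.ext_apply fun j => by
    change (DMapHomFun φ.toOrderHom k u.2 c).toOrderHom j = _
    erw [DMapHomFun_apply, if_pos fun y hy => absurd hy (hc y.1), cst1_apply]

lemma DMap_map_pull_comp {l : SimplexCategory} (χ : l ⟶ m) (φ : m ⟶ ⦋N⦌)
    (hsχ : StrictMono χ.toOrderHom) (hsφ : StrictMono φ.toOrderHom)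
    (hs : StrictMono (χ ≫ φ).toOrderHom) {aₗ bₗ : Fin (l.len + 1)} {a b : Fin (N + 1)}
    (ha : (χ ≫ φ).toOrderHom aₗ = a) (hb : (χ ≫ φ).toOrderHom bₗ = b)
    (ha' : φ.toOrderHom (χ.toOrderHom aₗ) = a) (hb' : φ.toOrderHom (χ.toOrderHom bₗ) = b)
    {k : SimplexCategoryᵒᵖ} (v : (DHom N a b).obj k) (hv : SupportedOn (χ ≫ φ) v) :
    (DMap χ).map k (pull (χ ≫ φ) hs ha hb v) = pull φ hsφ ha' hb' v := by
  refine DHom.ext fun c => Hom.ext_apply fun j => ?_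
  change (DMapHomFun χ.toOrderHom k (pull (χ ≫ φ) hs ha hb v).2 c).toOrderHom j =
    (v.2 (gapSet.map φ hsφ ha' hb' c)).toOrderHom j
  erw [DMapHomFun_apply]
  have hmap : ∀ y : gapSet l.len aₗ bₗ, χ.toOrderHom y.1 = c.1 →
      gapSet.map (χ ≫ φ) hs ha hb y = gapSet.map φ hsφ ha' hb' c :=
    fun y hy => Subtype.ext (congrArg φ.toOrderHom hy)
  by_cases hc : ∃ x, χ.toOrderHom x = c.1
  · obtain ⟨x, hx⟩ := hc
    obtain ⟨h1, h2⟩ := mem_gap_of_strictMono χ hsχ c.2.1 c.2.2 hx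
    have hiff : (∀ y : gapSet l.len aₗ bₗ, χ.toOrderHom y.1 = c.1 →
        ((pull (χ ≫ φ) hs ha hb v).2 y).toOrderHom j = 1) ↔
        (v.2 (gapSet.map φ hsφ ha' hb' c)).toOrderHom j = 1 :=
      ⟨fun h => hmap ⟨x, h1, h2⟩ hx ▸ h ⟨x, h1, h2⟩ hx, fun h y hy => by
        change (v.2 (gapSet.map (χ ≫ φ) hs ha hb y)).toOrderHom j = 1
        rwa [hmap y hy]⟩
    rw [if_congr hiff rfl rfl, fin2_ite_eq_self]
  · push Not at hc
    rw [if_pos fun y hy => absurd hy (hc y.1),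
      hv (gapSet.map φ hsφ ha' hb' c) fun z hz => hc z (hsφ.injective hz), cst1_apply]

lemma supportedOn_intervalIncl (a b : Fin (N + 1)) (hab : a ≤ b) {a' b' : Fin (N + 1)}
    (ha' : a ≤ a') (hb' : b' ≤ b) {k : SimplexCategoryᵒᵖ} (v : (DHom N a' b').obj k) :
    SupportedOn (intervalIncl a b hab) v := by
  intro c hc
  have h1 : (a : ℕ) < c.1 := ha'.trans_lt c.2.1
  have h2 : (c.1 : ℕ) < b := c.2.2.trans_le hb'
  have h3 : (c.1 : ℕ) - a < (b : ℕ) - a + 1 := by omega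
  exact (hc ⟨c.1 - a, h3⟩ (Fin.ext (show (a : ℕ) + (c.1 - a) = c.1 by omega))).elim

lemma supportedOn_δ (c : Fin (N + 2)) {a b : Fin (N + 2)} {k : SimplexCategoryᵒᵖ}
    (v : (DHom (N + 1) a b).obj k)
    (h : ∀ c' : gapSet (N + 1) a b, c'.1 = c → v.2 c' = cst1 k) : SupportedOn (δ c) v := by
  intro c' hc'
  by_contra hne
  obtain ⟨j, hj⟩ := Fin.exists_succAbove_eq fun he => hne (h c' he)
  exact hc' j hj

end DHom

end Cube

section Point

def SCat.fromEmpty (X : SCat) : emptySCat ⟶ X where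
  obj := Empty.elim
  map {x} := x.elim
  map_id x := x.elim
  map_comp {x} := x.elim
  map_natural {x} := x.elim

def SCat.toPt (X : SCat) : X ⟶ ptSCat where
  obj _ := PUnit.unit
  map _ _ := PUnit.unit
  map_id _ _ := rfl
  map_comp _ _ _ := rfl
  map_natural _ _ := rfl

def SCat.ptTo {X : SCat} (x : X.Obj) : ptSCat ⟶ X where
  obj _ := x
  map k _ := X.id x k
  map_id _ _ := rfl
  map_comp k _ _ := (X.id_comp k _).symm
  map_natural θ _ := (X.id_map x θ).symm

lemma SCat.toPt_comp_ptTo {X : SCat} (F : DCat 0 ⟶ X) :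
    (DCat 0).toPt ≫ SCat.ptTo (F.obj (0 : Fin 1)) = F := by
  refine SFunctor.ext_castHom (fun a => congrArg F.obj (Subsingleton.elim (α := Fin 1) 0 a))
    fun a b k v => ?_
  obtain rfl := Subsingleton.elim (α := Fin 1) a 0
  obtain rfl := Subsingleton.elim (α := Fin 1) b 0
  rw [Subsingleton.elim (α := (DHom 0 0 0).obj k) v ((DCat 0).id (0 : Fin 1) k)]
  erw [F.map_id]
  exact castHom_id _ k

end Point

namespace K01

variable {K : SSet.{0}} {X : SCat}

def lift (x y : X.Obj) (f : K ⟶ X.Hom x y) : K01 K ⟶ X where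
  obj
    | false => x
    | true => y
  map {a b} k g :=
    match a, b, g with
    | false, false, _ => X.id x k
    | false, true, g => f.app k g
    | true, true, _ => X.id y k
    | true, false, g => Empty.elim g
  map_id a k := by cases a <;> rfl
  map_comp {a b c} k g g' := by
    cases a <;> cases b <;> cases c <;>
      first
        | exact Empty.elim g
        | exact Empty.elim g'
        | exact (X.id_comp k _).symm
        | exact (X.comp_id k _).symm
  map_natural {a b} {k l} θ g := by
    cases a <;> cases b
    · exact (X.id_map _ θ).symm
    · exact ConcreteCategory.congr_hom (f.naturality θ) g
    · exact Empty.elim g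
    · exact (X.id_map _ θ).symm

lemma lift_comp {Y : SCat} (x y : X.Obj) (f : K ⟶ X.Hom x y) (p : X ⟶ Y) :
    lift x y f ≫ p = lift (p.obj x) (p.obj y) (f ≫ SFunctor.homNat p x y) := by
  refine SFunctor.ext' (funext fun a => by cases a <;> rfl) fun a b k g => ?_
  cases a <;> cases b
  · exact heq_of_eq (p.map_id _ k)
  · rfl
  · exact Empty.elim g
  · exact heq_of_eq (p.map_id _ k)

end K01

lemma K01map_comp_lift {K L : SSet.{0}} {X : SCat} (i : K ⟶ L) (x y : X.Obj)
    (f : L ⟶ X.Hom x y) :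
    K01map i ≫ K01.lift x y f = K01.lift x y (i ≫ f) := by
  refine SFunctor.ext' (funext fun a => by cases a <;> rfl) fun a b k g => ?_
  cases a <;> cases b <;> first | rfl | exact Empty.elim g

/-- A square from `∂Δ[N] ⟶ Δ[N]` to `𝔑 p`, unpacked (see `ofCommSq`): `simplex` is the
`N`-simplex of `𝔑 Y`, and `face φ` the `m`-simplex of `𝔑 X` over its face `φ`. -/
structure LiftData (N : ℕ) (X Y : SCat) (p : SFunctor X Y) where
  simplex : SFunctor (DCat N) Y
  face : ∀ {m : SimplexCategory} (φ : m ⟶ ⦋N⦌),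
    ¬Function.Surjective φ.toOrderHom → SFunctor (DCat m.len) X
  face_comp : ∀ {l m : SimplexCategory} (θ : l ⟶ m) (φ : m ⟶ ⦋N⦌)
    (h : ¬Function.Surjective φ.toOrderHom) (h' : ¬Function.Surjective (θ ≫ φ).toOrderHom),
    face (θ ≫ φ) h' = (DMap θ).comp' (face φ h)
  face_comp_p : ∀ {m : SimplexCategory} (φ : m ⟶ ⦋N⦌) (h),
    (face φ h).comp' p = (DMap φ).comp' simplex

namespace LiftData

open SimplexCategory

variable {X Y : SCat} {p : SFunctor X Y}

lemma face_congr {N : ℕ} (D : LiftData N X Y p) {m : SimplexCategory} {φ φ' : m ⟶ ⦋N⦌}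
    (h : φ = φ') {h₁ h₂} : D.face φ h₁ = D.face φ' h₂ := by
  subst h; rfl

lemma face_eq_of_strictMono {N : ℕ} (D : LiftData N X Y p) (H : SFunctor (DCat N) X)
    (hH : ∀ {m : SimplexCategory} (φ : m ⟶ ⦋N⦌) (hφ), StrictMono φ.toOrderHom →
      (DMap φ).comp' H = D.face φ hφ)
    {m : SimplexCategory} (φ : m ⟶ ⦋N⦌) (hφ) : (DMap φ).comp' H = D.face φ hφ := by
  obtain ⟨_, e, i, he, hi, rfl⟩ : ∃ (l : SimplexCategory) (e : m ⟶ l) (i : l ⟶ ⦋N⦌),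
      Epi e ∧ Mono i ∧ e ≫ i = φ :=
    ⟨_, _, _, inferInstance, inferInstance, Limits.image.fac φ⟩
  have hi' : ¬Function.Surjective i.toOrderHom := fun h =>
    hφ (h.comp (epi_iff_surjective.mp he))
  rw [D.face_comp e i hi' hφ, ← hH i hi' (i.toOrderHom.monotone.strictMono_of_injective
    (mono_iff_injective.mp hi)), DMap_comp]
  rfl

variable {n : ℕ} (D : LiftData (n + 1) X Y p)

local notation "last" => Fin.last (n + 1)

def vertex (a : Fin (n + 2)) : X.Obj :=
  (D.face (const ⦋0⦌ ⦋n + 1⦌ a) (const_not_surjective a)).obj (0 : Fin 1)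

lemma face_obj {m : SimplexCategory} (φ : m ⟶ ⦋n + 1⦌)
    (hφ : ¬Function.Surjective φ.toOrderHom) (a₀ : Fin (m.len + 1)) :
    (D.face φ hφ).obj a₀ = D.vertex (φ.toOrderHom a₀) := by
  have hfac : const ⦋0⦌ m a₀ ≫ φ = const ⦋0⦌ ⦋n + 1⦌ (φ.toOrderHom a₀) :=
    Hom.ext_apply fun _ => rfl
  have h := D.face_comp (const ⦋0⦌ m a₀) φ hφ (hfac ▸ const_not_surjective _)
  rw [D.face_congr hfac (h₂ := const_not_surjective _)] at h
  exact (SFunctor.congr_obj h (0 : Fin 1)).symm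

lemma p_obj_vertex (a : Fin (n + 2)) : p.obj (D.vertex a) = D.simplex.obj a :=
  SFunctor.congr_obj (D.face_comp_p _ (const_not_surjective a)) (0 : Fin 1)

def faceMap {m : SimplexCategory} (φ : m ⟶ ⦋n + 1⦌) (hs : StrictMono φ.toOrderHom)
    (hφ : ¬Function.Surjective φ.toOrderHom) (a₀ b₀ : Fin (m.len + 1))
    {a b : Fin (n + 2)} (ha : φ.toOrderHom a₀ = a) (hb : φ.toOrderHom b₀ = b)
    {k : SimplexCategoryᵒᵖ} (v : (DHom (n + 1) a b).obj k) :
    (X.Hom (D.vertex a) (D.vertex b)).obj k :=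
  castHom ((D.face_obj φ hφ a₀).trans (congrArg D.vertex ha))
    ((D.face_obj φ hφ b₀).trans (congrArg D.vertex hb))
    ((D.face φ hφ).map k (DHom.pull φ hs ha hb v))

section FaceMap

variable {m : SimplexCategory} (φ : m ⟶ ⦋n + 1⦌) (hs : StrictMono φ.toOrderHom)
  (hφ : ¬Function.Surjective φ.toOrderHom)

lemma faceMap_map (a₀ b₀ : Fin (m.len + 1)) {a b : Fin (n + 2)} (ha : φ.toOrderHom a₀ = a)
    (hb : φ.toOrderHom b₀ = b) {k k' : SimplexCategoryᵒᵖ} (θ : k ⟶ k')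
    (v : (DHom (n + 1) a b).obj k) :
    D.faceMap φ hs hφ a₀ b₀ ha hb ((DHom (n + 1) a b).map θ v) =
      (X.Hom (D.vertex a) (D.vertex b)).map θ (D.faceMap φ hs hφ a₀ b₀ ha hb v) := by
  rw [faceMap, faceMap, DHom.pull_map, castHom_map]
  erw [(D.face φ hφ).map_natural]

lemma p_map_faceMap (a₀ b₀ : Fin (m.len + 1)) {a b : Fin (n + 2)} (ha : φ.toOrderHom a₀ = a)
    (hb : φ.toOrderHom b₀ = b) {k : SimplexCategoryᵒᵖ} (v : (DHom (n + 1) a b).obj k)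
    (hv : DHom.SupportedOn φ v) :
    p.map k (D.faceMap φ hs hφ a₀ b₀ ha hb v) =
      castHom (D.p_obj_vertex a).symm (D.p_obj_vertex b).symm (D.simplex.map k v) := by
  have h := SFunctor.congr_map (D.face_comp_p φ hφ) a₀ b₀ k (DHom.pull φ hs ha hb v)
  change D.simplex.map k ((DMap φ).map k _) = _ at h
  rw [DHom.DMap_map_pull φ hs ha hb v hv] at h
  apply eq_of_heq
  rw [faceMap, SFunctor.map_castHom]
  refine (castHom_heq _ _ _).trans (HEq.trans ?_ (castHom_heq _ _ _).symm)
  refine (castHom_heq _ _ _).symm.trans (HEq.trans (heq_of_eq h.symm) ?_)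
  erw [SFunctor.map_castHom]
  exact castHom_heq _ _ _

lemma faceMap_self (a₀ b₀ : Fin (m.len + 1)) {a : Fin (n + 2)} (ha : φ.toOrderHom a₀ = a)
    (hb : φ.toOrderHom b₀ = a) {k : SimplexCategoryᵒᵖ} (v : (DHom (n + 1) a a).obj k) :
    D.faceMap φ hs hφ a₀ b₀ ha hb v = X.id (D.vertex a) k := by
  obtain rfl := hs.injective (hb.trans ha.symm)
  rw [faceMap, Subsingleton.elim (DHom.pull φ hs ha hb v) ((DCat m.len).id b₀ k)]
  erw [(D.face φ hφ).map_id, castHom_id]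

lemma faceMap_comp (a₀ d₀ b₀ : Fin (m.len + 1)) {a d b : Fin (n + 2)}
    (ha : φ.toOrderHom a₀ = a) (hd : φ.toOrderHom d₀ = d) (hb : φ.toOrderHom b₀ = b)
    (h1 : a < d) (h2 : d < b) {k : SimplexCategoryᵒᵖ} (v : (DHom (n + 1) a b).obj k)
    (h0 : v.2 ⟨d, h1, h2⟩ = cst0 k) :
    D.faceMap φ hs hφ a₀ b₀ ha hb v = X.comp k
      (D.faceMap φ hs hφ a₀ d₀ ha hd (DHom.restrict a d le_rfl h2.le h1.le v))
      (D.faceMap φ hs hφ d₀ b₀ hd hb (DHom.restrict d b h1.le le_rfl h2.le v)) := by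
  have hpull : DHom.pull φ hs ha hb v = (DCat m.len).comp k
      (DHom.pull φ hs ha hd (DHom.restrict a d le_rfl h2.le h1.le v))
      (DHom.pull φ hs hd hb (DHom.restrict d b h1.le le_rfl h2.le v)) := by
    have hd₀ : a₀ < d₀ ∧ d₀ < b₀ := mem_gap_of_strictMono φ hs (ha ▸ h1) (hb ▸ h2) hd
    exact DHom.eq_comp_restrict hd₀.1 hd₀.2 _ ((congrArg v.2 (Subtype.ext hd)).trans h0)
  rw [faceMap, faceMap, faceMap, castHom_comp]
  erw [← (D.face φ hφ).map_comp, ← hpull]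

lemma faceMap_DMap_map (a₀ b₀ : Fin (m.len + 1)) {k : SimplexCategoryᵒᵖ}
    (u : ((DCat m.len).Hom a₀ b₀).obj k) :
    D.faceMap φ hs hφ a₀ b₀ rfl rfl ((DMap φ).map k u) =
      castHom (D.face_obj φ hφ a₀) (D.face_obj φ hφ b₀) ((D.face φ hφ).map k u) := by
  unfold faceMap
  rw [DHom.pull_DMap_map φ hs u]

lemma faceMap_eq_of_fac {l : SimplexCategory} (χ : l ⟶ ⦋n + 1⦌) (χ₁ : l ⟶ m)
    (hfac : χ₁ ≫ φ = χ) (hsχ : StrictMono χ.toOrderHom)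
    (hχ : ¬Function.Surjective χ.toOrderHom) {aₗ bₗ : Fin (l.len + 1)}
    {a₀ b₀ : Fin (m.len + 1)} (ha₀ : χ₁.toOrderHom aₗ = a₀) (hb₀ : χ₁.toOrderHom bₗ = b₀)
    {a b : Fin (n + 2)} (ha : φ.toOrderHom a₀ = a) (hb : φ.toOrderHom b₀ = b)
    (ha' : χ.toOrderHom aₗ = a) (hb' : χ.toOrderHom bₗ = b)
    {k : SimplexCategoryᵒᵖ} (v : (DHom (n + 1) a b).obj k) (hv : DHom.SupportedOn χ v) :
    D.faceMap φ hs hφ a₀ b₀ ha hb v = D.faceMap χ hsχ hχ aₗ bₗ ha' hb' v := by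
  subst hfac ha₀ hb₀
  have hsχ₁ : StrictMono χ₁.toOrderHom := fun _ _ hij => hs.lt_iff_lt.mp (hsχ hij)
  have h := SFunctor.congr_map (D.face_comp χ₁ φ hφ hχ) aₗ bₗ k (DHom.pull _ hsχ ha' hb' v)
  change (D.face φ hφ).map k ((DMap χ₁).map k _) = _ at h
  rw [DHom.DMap_map_pull_comp χ₁ φ hsχ₁ hs hsχ ha' hb' ha hb v hv] at h
  apply eq_of_heq
  rw [faceMap, faceMap]
  erw [h]
  exact (castHom_heq _ _ _).trans ((castHom_heq _ _ _).trans (castHom_heq _ _ _).symm)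

/-- Both faces factor through the inclusion of the intersection of their images, on which `v`
is still supported. -/
lemma faceMap_eq_faceMap {m' : SimplexCategory} (ψ : m' ⟶ ⦋n + 1⦌)
    (hsψ : StrictMono ψ.toOrderHom) (hψ : ¬Function.Surjective ψ.toOrderHom)
    (a₀ b₀ : Fin (m.len + 1)) (a₁ b₁ : Fin (m'.len + 1)) {a b : Fin (n + 2)}
    (ha : φ.toOrderHom a₀ = a) (hb : φ.toOrderHom b₀ = b)
    (ha' : ψ.toOrderHom a₁ = a) (hb' : ψ.toOrderHom b₁ = b)
    {k : SimplexCategoryᵒᵖ} (v : (DHom (n + 1) a b).obj k)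
    (hvφ : DHom.SupportedOn φ v) (hvψ : DHom.SupportedOn ψ v) :
    D.faceMap φ hs hφ a₀ b₀ ha hb v = D.faceMap ψ hsψ hψ a₁ b₁ ha' hb' v := by
  obtain ⟨l, χ, χ₁, χ₂, hsχ, hχ₁, hχ₂, hrange⟩ :=
    exists_strictMono_range_eq_inter φ ψ hs hsψ ⟨a, ⟨a₀, ha⟩, ⟨a₁, ha'⟩⟩
  have hχ : ¬Function.Surjective χ.toOrderHom := fun h => hφ fun c => by
    have hc : c ∈ Set.range χ.toOrderHom := h c
    rw [hrange] at hc
    exact hc.1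
  obtain ⟨aₗ, haₗ⟩ : a ∈ Set.range χ.toOrderHom := hrange ▸ ⟨⟨a₀, ha⟩, ⟨a₁, ha'⟩⟩
  obtain ⟨bₗ, hbₗ⟩ : b ∈ Set.range χ.toOrderHom := hrange ▸ ⟨⟨b₀, hb⟩, ⟨b₁, hb'⟩⟩
  have hvχ : DHom.SupportedOn χ v := fun c hc => by
    by_cases hcφ : c.1 ∈ Set.range φ.toOrderHom
    · refine hvψ c fun x hx => ?_
      obtain ⟨y, hy⟩ : c.1 ∈ Set.range χ.toOrderHom := hrange ▸ ⟨hcφ, ⟨x, hx⟩⟩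
      exact hc y hy
    · exact hvφ c fun x hx => hcφ ⟨x, hx⟩
  rw [D.faceMap_eq_of_fac φ hs hφ χ χ₁ hχ₁ hsχ hχ
      (apply_eq_of_comp_eq hs hχ₁ (ha.trans haₗ.symm))
      (apply_eq_of_comp_eq hs hχ₁ (hb.trans hbₗ.symm)) ha hb haₗ hbₗ v hvχ,
    D.faceMap_eq_of_fac ψ hsψ hψ χ χ₂ hχ₂ hsχ hχ
      (apply_eq_of_comp_eq hsψ hχ₂ (ha'.trans haₗ.symm))
      (apply_eq_of_comp_eq hsψ hχ₂ (hb'.trans hbₗ.symm)) ha' hb' haₗ hbₗ v hvχ]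

end FaceMap

def intervalMap (a b : Fin (n + 2)) (hab : a ≤ b) (hne : ¬(a = 0 ∧ b = last))
    {k : SimplexCategoryᵒᵖ} (v : (DHom (n + 1) a b).obj k) :
    (X.Hom (D.vertex a) (D.vertex b)).obj k :=
  D.faceMap (intervalIncl a b hab) (intervalIncl_strictMono a b hab)
    (intervalIncl_not_surjective a b hab hne) 0 (Fin.last _) (intervalIncl_zero a b hab)
    (intervalIncl_last a b hab) v

lemma intervalMap_comp (a d b : Fin (n + 2)) (h1 : a < d) (h2 : d < b)
    (hne : ¬(a = 0 ∧ b = last)) (hne₁ : ¬(a = 0 ∧ d = last)) (hne₂ : ¬(d = 0 ∧ b = last))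
    {k : SimplexCategoryᵒᵖ} (v : (DHom (n + 1) a b).obj k) (h0 : v.2 ⟨d, h1, h2⟩ = cst0 k) :
    D.intervalMap a b (h1.le.trans h2.le) hne v = X.comp k
      (D.intervalMap a d h1.le hne₁ (DHom.restrict a d le_rfl h2.le h1.le v))
      (D.intervalMap d b h2.le hne₂ (DHom.restrict d b h1.le le_rfl h2.le v)) := by
  have hd : (d : ℕ) - a < (b : ℕ) - a + 1 := by
    have := Fin.lt_def.mp h1; have := Fin.lt_def.mp h2; omega
  have hd' : (intervalIncl a b (h1.le.trans h2.le)).toOrderHom ⟨(d : ℕ) - a, hd⟩ = d :=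
    Fin.ext (Nat.add_sub_of_le h1.le)
  rw [intervalMap, D.faceMap_comp _ _ _ 0 ⟨(d : ℕ) - a, hd⟩ (Fin.last _) _ hd' _ h1 h2 v h0]
  congr 1
  · exact D.faceMap_eq_faceMap _ _ _ _ _ _ _ _ _ _ _ _ _ _ _
      (DHom.supportedOn_intervalIncl a b _ le_rfl h2.le _)
      (DHom.supportedOn_intervalIncl a d h1.le le_rfl le_rfl _)
  · exact D.faceMap_eq_faceMap _ _ _ _ _ _ _ _ _ _ _ _ _ _ _
      (DHom.supportedOn_intervalIncl a b _ h1.le le_rfl _)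
      (DHom.supportedOn_intervalIncl d b h2.le le_rfl le_rfl _)

lemma not_zero_and_eq_last (c : gapSet (n + 1) 0 last) : ¬((0 : Fin (n + 2)) = 0 ∧ c.1 = last) :=
  fun h => c.2.2.ne h.2

lemma not_eq_zero_and_last (c : gapSet (n + 1) 0 last) : ¬(c.1 = 0 ∧ last = last) :=
  fun h => c.2.1.ne' h.1

lemma not_eq_zero_and_eq_last (a : Fin (n + 2)) : ¬(a = 0 ∧ a = last) :=
  fun h => Fin.last_pos.ne' (h.2.symm.trans h.1)

def boundaryMapOfOne (c : gapSet (n + 1) 0 last) {k : SimplexCategoryᵒᵖ}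
    (v : (DHom (n + 1) 0 last).obj k) : (X.Hom (D.vertex 0) (D.vertex last)).obj k :=
  D.faceMap (δ c.1) (δ_strictMono c.1) (δ_not_surjective c.1) 0 (Fin.last n)
    (δ_apply_zero c.2.1) (δ_apply_last c.2.2) v

def boundaryMapOfZero (c : gapSet (n + 1) 0 last) {k : SimplexCategoryᵒᵖ}
    (v : (DHom (n + 1) 0 last).obj k) : (X.Hom (D.vertex 0) (D.vertex last)).obj k :=
  X.comp k
    (D.intervalMap 0 c.1 c.2.1.le (not_zero_and_eq_last c)
      (DHom.restrict 0 c.1 le_rfl c.2.2.le c.2.1.le v))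
    (D.intervalMap c.1 last c.2.2.le (not_eq_zero_and_last c)
      (DHom.restrict c.1 last c.2.1.le le_rfl c.2.2.le v))

lemma supportedOn_δ_restrict {k : SimplexCategoryᵒᵖ} {v : (DHom (n + 1) 0 last).obj k}
    {c : gapSet (n + 1) 0 last} (h : v.2 c = cst1 k) (a b : Fin (n + 2)) (h1 h2 h3) :
    DHom.SupportedOn (δ c.1) (DHom.restrict a b h1 h2 h3 v) :=
  DHom.supportedOn_δ c.1 _ fun _ hc' => (congrArg v.2 (Subtype.ext hc')).trans h

lemma boundaryMapOfOne_eq {k : SimplexCategoryᵒᵖ} (v : (DHom (n + 1) 0 last).obj k)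
    (c c' : gapSet (n + 1) 0 last) (h : v.2 c = cst1 k) (h' : v.2 c' = cst1 k) :
    D.boundaryMapOfOne c v = D.boundaryMapOfOne c' v :=
  D.faceMap_eq_faceMap _ _ _ _ _ _ _ _ _ _ _ _ _ _ v
    (supportedOn_δ_restrict h 0 last le_rfl le_rfl (Fin.zero_le _))
    (supportedOn_δ_restrict h' 0 last le_rfl le_rfl (Fin.zero_le _))

lemma boundaryMapOfOne_eq_boundaryMapOfZero {k : SimplexCategoryᵒᵖ}
    (v : (DHom (n + 1) 0 last).obj k) (c d : gapSet (n + 1) 0 last) (h1 : v.2 c = cst1 k)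
    (h0 : v.2 d = cst0 k) : D.boundaryMapOfOne c v = D.boundaryMapOfZero d v := by
  have hne : d.1 ≠ c.1 := fun he => cst0_ne_cst1 k (h0.symm.trans (Subtype.ext he ▸ h1))
  obtain ⟨d₀, hd₀⟩ := Fin.exists_succAbove_eq hne
  rw [boundaryMapOfOne, D.faceMap_comp (δ c.1) (δ_strictMono c.1) (δ_not_surjective c.1) 0 d₀
    (Fin.last n) _ hd₀ _ d.2.1 d.2.2 v h0, boundaryMapOfZero]
  congr 1
  · exact D.faceMap_eq_faceMap _ _ _ _ _ _ _ _ _ _ _ _ _ _ _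
      (supportedOn_δ_restrict h1 _ _ _ _ _)
      (DHom.supportedOn_intervalIncl 0 d.1 d.2.1.le le_rfl le_rfl _)
  · exact D.faceMap_eq_faceMap _ _ _ _ _ _ _ _ _ _ _ _ _ _ _
      (supportedOn_δ_restrict h1 _ _ _ _ _)
      (DHom.supportedOn_intervalIncl d.1 last d.2.2.le le_rfl le_rfl _)

/-- Both sides are the triple composite through the vertices `d` and `d'`. -/
lemma boundaryMapOfZero_eq_of_lt {k : SimplexCategoryᵒᵖ} (v : (DHom (n + 1) 0 last).obj k)
    (d d' : gapSet (n + 1) 0 last) (hlt : d.1 < d'.1) (h0 : v.2 d = cst0 k)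
    (h0' : v.2 d' = cst0 k) : D.boundaryMapOfZero d v = D.boundaryMapOfZero d' v := by
  have hne : ¬(d.1 = 0 ∧ d'.1 = last) := fun h => d.2.1.ne' h.1
  rw [boundaryMapOfZero, boundaryMapOfZero,
    D.intervalMap_comp d.1 d'.1 last hlt d'.2.2 _ hne (not_eq_zero_and_last d') _ h0',
    D.intervalMap_comp 0 d.1 d'.1 d.2.1 hlt _ (not_zero_and_eq_last d) hne _ h0, X.assoc]
  rfl

lemma boundaryMapOfZero_eq {k : SimplexCategoryᵒᵖ} (v : (DHom (n + 1) 0 last).obj k)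
    (d d' : gapSet (n + 1) 0 last) (h0 : v.2 d = cst0 k) (h0' : v.2 d' = cst0 k) :
    D.boundaryMapOfZero d v = D.boundaryMapOfZero d' v := by
  rcases lt_trichotomy d.1 d'.1 with h | h | h
  · exact D.boundaryMapOfZero_eq_of_lt v d d' h h0 h0'
  · rw [Subtype.ext h]
  · exact (D.boundaryMapOfZero_eq_of_lt v d' d h h0' h0).symm

open scoped Classical in
noncomputable def boundaryMap (k : SimplexCategoryᵒᵖ)
    (w : (DHom.boundary (n + 1) 0 last).toSSet.obj k) :
    (X.Hom (D.vertex 0) (D.vertex last)).obj k :=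
  let c := Exists.choose (p := fun c => w.1.2 c = cst1 k ∨ w.1.2 c = cst0 k) w.2
  if w.1.2 c = cst1 k then D.boundaryMapOfOne c w.1 else D.boundaryMapOfZero c w.1

lemma boundaryMap_eq_of_one {k : SimplexCategoryᵒᵖ}
    (w : (DHom.boundary (n + 1) 0 last).toSSet.obj k) (c : gapSet (n + 1) 0 last)
    (h : w.1.2 c = cst1 k) : D.boundaryMap k w = D.boundaryMapOfOne c w.1 := by
  have hc := Exists.choose_spec (p := fun c => w.1.2 c = cst1 k ∨ w.1.2 c = cst0 k) w.2
  rw [boundaryMap]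
  split_ifs with h'
  · exact D.boundaryMapOfOne_eq w.1 _ c h' h
  · exact (D.boundaryMapOfOne_eq_boundaryMapOfZero w.1 c _ h (hc.resolve_left h')).symm

lemma boundaryMap_eq_of_zero {k : SimplexCategoryᵒᵖ}
    (w : (DHom.boundary (n + 1) 0 last).toSSet.obj k) (d : gapSet (n + 1) 0 last)
    (h : w.1.2 d = cst0 k) : D.boundaryMap k w = D.boundaryMapOfZero d w.1 := by
  have hc := Exists.choose_spec (p := fun c => w.1.2 c = cst1 k ∨ w.1.2 c = cst0 k) w.2
  rw [boundaryMap]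
  split_ifs with h'
  · exact D.boundaryMapOfOne_eq_boundaryMapOfZero w.1 _ d h' h
  · exact D.boundaryMapOfZero_eq w.1 _ d (hc.resolve_left h') h

lemma boundaryMap_map {k k' : SimplexCategoryᵒᵖ} (θ : k ⟶ k')
    (w : (DHom.boundary (n + 1) 0 last).toSSet.obj k) :
    D.boundaryMap k' ((DHom.boundary (n + 1) 0 last).toSSet.map θ w) =
      (X.Hom (D.vertex 0) (D.vertex last)).map θ (D.boundaryMap k w) := by
  obtain ⟨c, hc | hc⟩ := w.2
  · rw [D.boundaryMap_eq_of_one _ c ((congrArg _ hc).trans (comp_cst1 θ)),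
      D.boundaryMap_eq_of_one w c hc]
    exact D.faceMap_map _ _ _ _ _ _ _ θ w.1
  · rw [D.boundaryMap_eq_of_zero _ c ((congrArg _ hc).trans (comp_cst0 θ)),
      D.boundaryMap_eq_of_zero w c hc, boundaryMapOfZero, boundaryMapOfZero, X.comp_map]
    erw [DHom.restrict_map, DHom.restrict_map]
    rw [intervalMap, intervalMap, D.faceMap_map, D.faceMap_map]
    rfl

lemma p_map_boundaryMap {k : SimplexCategoryᵒᵖ}
    (w : (DHom.boundary (n + 1) 0 last).toSSet.obj k) :
    p.map k (D.boundaryMap k w) =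
      castHom (D.p_obj_vertex 0).symm (D.p_obj_vertex last).symm (D.simplex.map k w.1) := by
  obtain ⟨c, hc | hc⟩ := w.2
  · rw [D.boundaryMap_eq_of_one w c hc]
    exact D.p_map_faceMap _ _ _ _ _ _ _ w.1 (supportedOn_δ_restrict hc 0 last le_rfl le_rfl _)
  · rw [D.boundaryMap_eq_of_zero w c hc, boundaryMapOfZero, p.map_comp, intervalMap,
      intervalMap,
      D.p_map_faceMap _ _ _ _ _ _ _ _ (DHom.supportedOn_intervalIncl 0 c.1 _ le_rfl le_rfl _),
      D.p_map_faceMap _ _ _ _ _ _ _ _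
        (DHom.supportedOn_intervalIncl c.1 last _ le_rfl le_rfl _), castHom_comp]
    erw [← D.simplex.map_comp, ← DHom.eq_comp_restrict c.2.1 c.2.2 w.1 hc]

noncomputable def boundaryHom :
    (DHom.boundary (n + 1) 0 last).toSSet ⟶ X.Hom (D.vertex 0) (D.vertex last) where
  app k := ↾(D.boundaryMap k)
  naturality _ _ θ := by
    ext w
    exact D.boundaryMap_map θ w

def cubeHom : DHom (n + 1) 0 last ⟶ Y.Hom (p.obj (D.vertex 0)) (p.obj (D.vertex last)) where
  app k := ↾fun v => castHom (D.p_obj_vertex 0).symm (D.p_obj_vertex last).symm (D.simplex.map k v)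
  naturality _ _ θ := by
    ext v
    exact (congrArg (castHom _ _) (D.simplex.map_natural θ v)).trans (castHom_map _ _ θ _).symm

lemma boundary_commSq :
    CommSq (K01.lift _ _ D.boundaryHom) (K01map (DHom.boundary (n + 1) 0 last).ι) p
      (K01.lift _ _ D.cubeHom) := by
  constructor
  rw [K01.lift_comp, K01map_comp_lift]
  congr 1
  ext k w
  exact D.p_map_boundaryMap w

structure CubeLift where
  map : ∀ k, (DHom (n + 1) 0 last).obj k → (X.Hom (D.vertex 0) (D.vertex last)).obj k
  map_natural : ∀ {k k' : SimplexCategoryᵒᵖ} (θ : k ⟶ k') (v),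
    map k' ((DHom (n + 1) 0 last).map θ v) = (X.Hom (D.vertex 0) (D.vertex last)).map θ (map k v)
  map_boundary : ∀ {k} (w : (DHom.boundary (n + 1) 0 last).toSSet.obj k),
    map k w.1 = D.boundaryMap k w
  p_map : ∀ {k} (v), p.map k (map k v) =
    castHom (D.p_obj_vertex 0).symm (D.p_obj_vertex last).symm (D.simplex.map k v)

noncomputable def cubeLift (hp : rlpOf genCof p) : D.CubeLift :=
  have : HasLiftingProperty (K01map (DHom.boundary (n + 1) 0 last).ι) p :=
    hp _ (Or.inr ⟨_, _, _, inferInstance, ⟨Iso.refl _⟩⟩)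
  let L := D.boundary_commSq.lift
  have hobj := congrArg SFunctor.obj D.boundary_commSq.fac_left
  { map k v := castHom (congrFun hobj false) (congrFun hobj true)
      (L.map (x := false) (y := true) k v)
    map_natural θ v := (congrArg (castHom _ _) (L.map_natural (x := false) (y := true) θ v)).trans
      (castHom_map _ _ θ _).symm
    map_boundary w := (SFunctor.congr_map D.boundary_commSq.fac_left false true _ w).symm
    p_map v := eq_of_heq <| (heq_of_eq (SFunctor.map_castHom p _ _ _)).trans <|
      (castHom_heq _ _ _).trans <|
      ((heq_of_eq (SFunctor.congr_map D.boundary_commSq.fac_right false true _ v)).trans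
        (castHom_heq _ _ _)).symm }

variable {D}

namespace CubeLift

variable (L : D.CubeLift)

open scoped Classical in
noncomputable def liftMap (a b : Fin (n + 2)) (k : SimplexCategoryᵒᵖ)
    (v : (DHom (n + 1) a b).obj k) : (X.Hom (D.vertex a) (D.vertex b)).obj k :=
  if h : a = 0 ∧ b = last then
    castHom (congrArg D.vertex h.1).symm (congrArg D.vertex h.2).symm
      (L.map k (castHom (X := DCat (n + 1)) h.1 h.2 v))
  else D.intervalMap a b v.1.down h v

lemma liftMap_zero_last (k : SimplexCategoryᵒᵖ) (v : (DHom (n + 1) 0 last).obj k) :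
    L.liftMap 0 last k v = L.map k v :=
  dif_pos ⟨rfl, rfl⟩

lemma liftMap_eq_intervalMap {a b : Fin (n + 2)} (h : ¬(a = 0 ∧ b = last)) (k : SimplexCategoryᵒᵖ)
    (v : (DHom (n + 1) a b).obj k) : L.liftMap a b k v = D.intervalMap a b v.1.down h v :=
  dif_neg h

lemma liftMap_self (a : Fin (n + 2)) (k : SimplexCategoryᵒᵖ) (v : (DHom (n + 1) a a).obj k) :
    L.liftMap a a k v = X.id (D.vertex a) k := by
  rw [L.liftMap_eq_intervalMap (not_eq_zero_and_eq_last a), intervalMap, D.faceMap_self]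

lemma liftMap_comp {a b c : Fin (n + 2)} (k : SimplexCategoryᵒᵖ)
    (v : (DHom (n + 1) a b).obj k) (w : (DHom (n + 1) b c).obj k) :
    L.liftMap a c k ((DCat (n + 1)).comp k v w) =
      X.comp k (L.liftMap a b k v) (L.liftMap b c k w) := by
  rcases v.1.down.eq_or_lt with rfl | hab
  · rw [Subsingleton.elim v ((DCat (n + 1)).id a k)]
    erw [(DCat (n + 1)).id_comp, L.liftMap_self, X.id_comp]
  rcases w.1.down.eq_or_lt with rfl | hbc
  · rw [Subsingleton.elim w ((DCat (n + 1)).id b k)]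
    erw [(DCat (n + 1)).comp_id, L.liftMap_self, X.comp_id]
  have hmid : ((DCat (n + 1)).comp k v w).2 ⟨b, hab, hbc⟩ = cst0 k :=
    DCompFun_mid k v.2 w.2 _ rfl
  have hab' : ¬(a = 0 ∧ b = last) := fun h => (h.2 ▸ hbc).not_ge (Fin.le_last c)
  have hbc' : ¬(b = 0 ∧ c = last) := fun h => (h.1 ▸ hab).not_ge (Fin.zero_le a)
  rw [L.liftMap_eq_intervalMap hab', L.liftMap_eq_intervalMap hbc']
  by_cases hac : a = 0 ∧ c = last
  · obtain ⟨rfl, rfl⟩ := hac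
    have hvw : (DCat (n + 1)).comp k v w ∈ (DHom.boundary (n + 1) 0 last).obj k :=
      ⟨⟨b, hab, hbc⟩, Or.inr hmid⟩
    erw [L.liftMap_zero_last, L.map_boundary ⟨_, hvw⟩,
      D.boundaryMap_eq_of_zero ⟨_, hvw⟩ ⟨b, hab, hbc⟩ hmid]
    change X.comp k (D.intervalMap 0 b _ _ (DHom.restrict 0 b le_rfl _ _ _))
      (D.intervalMap b last _ _ (DHom.restrict b last _ le_rfl _ _)) = _
    rw [DHom.restrict_comp_left, DHom.restrict_comp_right]
  · erw [L.liftMap_eq_intervalMap hac]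
    rw [D.intervalMap_comp a b c hab hbc hac hab' hbc' _ hmid,
      DHom.restrict_comp_left, DHom.restrict_comp_right]

lemma liftMap_map {a b : Fin (n + 2)} {k k' : SimplexCategoryᵒᵖ} (θ : k ⟶ k')
    (v : (DHom (n + 1) a b).obj k) :
    L.liftMap a b k' ((DHom (n + 1) a b).map θ v) =
      (X.Hom (D.vertex a) (D.vertex b)).map θ (L.liftMap a b k v) := by
  by_cases h : a = 0 ∧ b = last
  · obtain ⟨rfl, rfl⟩ := h
    rw [L.liftMap_zero_last, L.liftMap_zero_last, L.map_natural]
  · rw [L.liftMap_eq_intervalMap h, L.liftMap_eq_intervalMap h]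
    exact D.faceMap_map _ _ _ _ _ _ _ θ v

lemma liftMap_eq_faceMap {m : SimplexCategory} (φ : m ⟶ ⦋n + 1⦌)
    (hs : StrictMono φ.toOrderHom) (hφ : ¬Function.Surjective φ.toOrderHom)
    (a₀ b₀ : Fin (m.len + 1)) {a b : Fin (n + 2)}
    (ha : φ.toOrderHom a₀ = a) (hb : φ.toOrderHom b₀ = b) {k : SimplexCategoryᵒᵖ}
    (v : (DHom (n + 1) a b).obj k) (hv : DHom.SupportedOn φ v) :
    L.liftMap a b k v = D.faceMap φ hs hφ a₀ b₀ ha hb v := by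
  by_cases h : a = 0 ∧ b = last
  · obtain ⟨rfl, rfl⟩ := h
    obtain ⟨c, hc⟩ : ∃ c, ∀ x, φ.toOrderHom x ≠ c := by
      simpa [Function.Surjective] using hφ
    have hc' : (0 : Fin (n + 2)) < c ∧ c < last :=
      ⟨(Fin.zero_le c).lt_of_ne fun h => hc a₀ (ha.trans h),
        (Fin.le_last c).lt_of_ne fun h => hc b₀ (hb.trans h.symm)⟩
    have hone : v.2 ⟨c, hc'⟩ = cst1 k := hv _ hc
    rw [L.liftMap_zero_last, L.map_boundary ⟨v, ⟨c, hc'⟩, Or.inl hone⟩,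
      D.boundaryMap_eq_of_one ⟨v, ⟨c, hc'⟩, Or.inl hone⟩ ⟨c, hc'⟩ hone]
    exact D.faceMap_eq_faceMap _ _ _ _ _ _ _ _ _ _ _ _ _ _ _
      (supportedOn_δ_restrict hone 0 last le_rfl le_rfl _) hv
  · rw [L.liftMap_eq_intervalMap h]
    exact D.faceMap_eq_faceMap _ _ _ _ _ _ _ _ _ _ _ _ _ _ _
      (DHom.supportedOn_intervalIncl a b _ le_rfl le_rfl v) hv

noncomputable def liftFunctor : SFunctor (DCat (n + 1)) X where
  obj := D.vertex
  map {a b} k v := L.liftMap a b k v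
  map_id a k := L.liftMap_self a k _
  map_comp k v w := L.liftMap_comp k v w
  map_natural θ v := L.liftMap_map θ v

lemma liftFunctor_comp_p : L.liftFunctor.comp' p = D.simplex := by
  refine SFunctor.ext_castHom D.p_obj_vertex fun (a b : Fin (n + 2)) k v => ?_
  change castHom _ _ (p.map k (L.liftMap a b k v)) = _
  by_cases h : a = 0 ∧ b = last
  · obtain ⟨rfl, rfl⟩ := h
    erw [L.liftMap_zero_last, L.p_map, castHom_castHom]
  · erw [L.liftMap_eq_intervalMap h]
    exact (congrArg (castHom _ _) (D.p_map_faceMap _ _ _ _ _ _ _ v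
      (DHom.supportedOn_intervalIncl a b _ le_rfl le_rfl v))).trans (castHom_castHom _ _ _ _ _)

lemma DMap_comp_liftFunctor {m : SimplexCategory} (φ : m ⟶ ⦋n + 1⦌)
    (hφ : ¬Function.Surjective φ.toOrderHom) : (DMap φ).comp' L.liftFunctor = D.face φ hφ := by
  refine D.face_eq_of_strictMono _ (fun φ hφ hs => ?_) φ hφ
  refine SFunctor.ext_castHom (fun a₀ => (D.face_obj φ hφ a₀).symm) fun a₀ b₀ k u => ?_
  change castHom _ _ (L.liftMap _ _ k ((DMap φ).map k u)) = _
  erw [L.liftMap_eq_faceMap φ hs hφ a₀ b₀ rfl rfl _ (DHom.supportedOn_DMap_map φ u),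
    D.faceMap_DMap_map, castHom_castHom]

end CubeLift

end LiftData

namespace LiftData

variable {X Y : SCat} {p : SFunctor X Y}

lemma exists_lift_zero (hp : rlpOf genCof p) (D : LiftData 0 X Y p) :
    ∃ H : SFunctor (DCat 0) X, H.comp' p = D.simplex ∧
      ∀ {m : SimplexCategory} (φ : m ⟶ ⦋0⦌) (hφ), (DMap φ).comp' H = D.face φ hφ := by
  have : HasLiftingProperty emptyToPt p := hp emptyToPt (Or.inl ⟨Iso.refl _⟩)
  have sq : CommSq X.fromEmpty emptyToPt p (SCat.ptTo (D.simplex.obj (0 : Fin 1))) :=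
    ⟨SFunctor.ext' (funext fun x => x.elim) fun x => x.elim⟩
  refine ⟨(DCat 0).toPt ≫ sq.lift, ?_, fun φ hφ =>
    (hφ fun _ => ⟨0, Subsingleton.elim (α := Fin 1) _ _⟩).elim⟩
  change (DCat 0).toPt ≫ sq.lift ≫ p = D.simplex
  rw [sq.fac_right]
  exact SCat.toPt_comp_ptTo D.simplex

lemma exists_lift (hp : rlpOf genCof p) {N : ℕ} (D : LiftData N X Y p) :
    ∃ H : SFunctor (DCat N) X, H.comp' p = D.simplex ∧
      ∀ {m : SimplexCategory} (φ : m ⟶ ⦋N⦌) (hφ), (DMap φ).comp' H = D.face φ hφ := by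
  cases N with
  | zero => exact D.exists_lift_zero hp
  | succ n =>
    let L := D.cubeLift hp
    exact ⟨L.liftFunctor, L.liftFunctor_comp_p, L.DMap_comp_liftFunctor⟩

def ofCommSq {n : ℕ} {f : (∂Δ[n] : SSet.{0}) ⟶ hcNerve.obj X} {g : Δ[n] ⟶ hcNerve.obj Y}
    (sq : CommSq f ∂Δ[n].ι (hcNerve.map p) g) : LiftData n X Y p where
  simplex := SSet.yonedaEquiv g
  face {m} φ hφ := f.app (op m) ⟨SSet.stdSimplex.objEquiv.symm φ, hφ⟩
  face_comp θ φ hφ _ :=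
    ConcreteCategory.congr_hom (f.naturality θ.op) ⟨SSet.stdSimplex.objEquiv.symm φ, hφ⟩
  face_comp_p {m} φ hφ := by
    refine (ConcreteCategory.congr_hom (congrArg (fun η => η.app (op m)) sq.w)
      ⟨SSet.stdSimplex.objEquiv.symm φ, hφ⟩).trans ?_
    conv_lhs => rw [← SSet.yonedaEquiv.symm_apply_apply g]
    rfl

end LiftData

lemma hasLiftingProperty_boundary_ι_hcNerve {X Y : SCat} {p : X ⟶ Y} (hp : rlpOf genCof p)
    (n : ℕ) : HasLiftingProperty ∂Δ[n].ι (hcNerve.map p) where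
  sq_hasLift {f g} sq := by
    obtain ⟨H, hHp, hHface⟩ := (LiftData.ofCommSq sq).exists_lift hp
    refine ⟨⟨⟨SSet.yonedaEquiv.symm H, ?_, ?_⟩⟩⟩
    · ext k ⟨s, hs⟩
      exact hHface (SSet.stdSimplex.objEquiv s) hs
    · apply SSet.yonedaEquiv.injective
      erw [SSet.yonedaEquiv_comp, Equiv.apply_symm_apply]
      exact hHp

/-- For any realization of the colimit-preserving functor
`Δ_𝔑 : sSet → sCat` with `Δ_𝔑(Δⁿ) = Δ_𝔑ⁿ` (equivalently, any left adjoint of the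
homotopy coherent nerve `𝔑`), the map `Δ_𝔑(∂Δⁿ) → Δ_𝔑ⁿ` induced by the boundary
inclusion `∂Δⁿ → Δⁿ` is a cofibration in `sCat`. -/
theorem DeltaN_boundary_inclusion_cofibration
    (F : SSet.{0} ⥤ SCat) (adj : F ⊣ hcNerve) (n : ℕ) :
    Cofib (F.map ∂Δ[n].ι) := by
  intro X Y p hp
  rw [adj.hasLiftingProperty_iff]
  exact hasLiftingProperty_boundary_ι_hcNerve hp n
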